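/- arXiv:2306.06648 — 3 statements merged into one kernel-verified Lean document; each statement's English description precedes it below -/
import Mathlib

section
/- Cardinality bound for the auxiliary random variable. Fix finite alphabets 𝒳, 𝒮, 𝒴, 𝒵, a state pmf P_S, and a channel law P_{YZ|XS}, with joint law (S, U, X, Y, Z) ~ P_{UX} · P_S · P_{YZ|XS}. For every finite alphabet 𝒰 and pmf P_{UX} on 𝒰 × 𝒳, there exist an alphabet 𝒰' with |𝒰'| ≤ |𝒳| + 1 and a pmf P_{U'X} on 𝒰' × 𝒳 whose 𝒳-marginal equals that of P_{UX}, such that under the corresponding joint laws I(U'; Z) = I(U; Z) and I(X; Y | U', S) = I(X; Y | U, S) (and I(X; Y | S) is unchanged); consequently the rate region {(R0, R1) : R0 ≤ I(U; Z), R1 ≤ I(X; Y | U, S), R0 + R1 ≤ I(X; Y | S)} is the same for (U, X) and (U', X). -/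
open scoped BigOperators
open Filter

noncomputable section

/-- A probability mass function on a finite alphabet. -/
def IsPMF {α : Type*} [Fintype α] (p : α → ℝ) : Prop :=
  (∀ a, 0 ≤ p a) ∧ ∑ a, p a = 1

/-- A joint probability mass function on a pair of finite alphabets. -/
def IsPMF2 {α β : Type*} [Fintype α] [Fintype β] (p : α → β → ℝ) : Prop :=
  (∀ a b, 0 ≤ p a b) ∧ ∑ a, ∑ b, p a b = 1

/-- A transition kernel (channel) with a single input. -/
def IsChan1 {α γ : Type*} [Fintype γ] (W : α → γ → ℝ) : Prop :=
  ∀ a, (∀ c, 0 ≤ W a c) ∧ ∑ c, W a c = 1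

/-- A transition kernel (channel) with two inputs. -/
def IsChan2 {α β γ : Type*} [Fintype γ] (W : α → β → γ → ℝ) : Prop :=
  ∀ a b, (∀ c, 0 ≤ W a b c) ∧ ∑ c, W a b c = 1

/-- Mutual information `I(A;B)` (in bits, i.e. logarithm base 2) of a joint pmf `p`. -/
def MI {A B : Type*} [Fintype A] [Fintype B] (p : A → B → ℝ) : ℝ :=
  ∑ a, ∑ b,
    if p a b = 0 then 0
    else p a b * Real.logb 2 (p a b / ((∑ b', p a b') * (∑ a', p a' b)))

/-- Conditional mutual information `I(A;B|C)` (in bits) of a joint pmf `p c a b`. -/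
def CMI {C A B : Type*} [Fintype C] [Fintype A] [Fintype B] (p : C → A → B → ℝ) : ℝ :=
  ∑ c, ∑ a, ∑ b,
    if p c a b = 0 then 0
    else p c a b * Real.logb 2
      ((∑ a', ∑ b', p c a' b') * p c a b / ((∑ b', p c a b') * (∑ a', p c a' b)))

section Rates

variable {U 𝓧 𝓢 𝓨 𝓩 : Type*} [Fintype U] [Fintype 𝓧] [Fintype 𝓢] [Fintype 𝓨] [Fintype 𝓩]

/-- `I(U;Z)` under the joint law `(S,U,X,Y,Z) ~ P_{UX}·P_S·P_{YZ|XS}`. -/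
def rateIUZ (pUX : U → 𝓧 → ℝ) (pS : 𝓢 → ℝ) (W : 𝓧 → 𝓢 → 𝓨 × 𝓩 → ℝ) : ℝ :=
  MI (fun (u : U) (z : 𝓩) => ∑ s, ∑ x, ∑ y, pUX u x * pS s * W x s (y, z))

/-- `I(X;Y|U,S)` under the joint law `(S,U,X,Y,Z) ~ P_{UX}·P_S·P_{YZ|XS}`. -/
def rateIXY_US (pUX : U → 𝓧 → ℝ) (pS : 𝓢 → ℝ) (W : 𝓧 → 𝓢 → 𝓨 × 𝓩 → ℝ) : ℝ :=
  CMI (fun (us : U × 𝓢) (x : 𝓧) (y : 𝓨) => pUX us.1 x * pS us.2 * ∑ z, W x us.2 (y, z))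

/-- `I(U;Y|S)` under the joint law `(S,U,X,Y,Z) ~ P_{UX}·P_S·P_{YZ|XS}`. -/
def rateIUY_S (pUX : U → 𝓧 → ℝ) (pS : 𝓢 → ℝ) (W : 𝓧 → 𝓢 → 𝓨 × 𝓩 → ℝ) : ℝ :=
  CMI (fun (s : 𝓢) (u : U) (y : 𝓨) => ∑ x, pUX u x * pS s * ∑ z, W x s (y, z))

/-- `I(X;Y|S)` for an input pmf `pX`, state pmf `pS` and channel `W`. -/
def rateIXY_S (pX : 𝓧 → ℝ) (pS : 𝓢 → ℝ) (W : 𝓧 → 𝓢 → 𝓨 × 𝓩 → ℝ) : ℝ :=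
  CMI (fun (s : 𝓢) (x : 𝓧) (y : 𝓨) => pX x * pS s * ∑ z, W x s (y, z))

/-- `I(X;Z)` for an input pmf `pX`, state pmf `pS` and channel `W`. -/
def rateIXZ (pX : 𝓧 → ℝ) (pS : 𝓢 → ℝ) (W : 𝓧 → 𝓢 → 𝓨 × 𝓩 → ℝ) : ℝ :=
  MI (fun (x : 𝓧) (z : 𝓩) => ∑ s, ∑ y, pX x * pS s * W x s (y, z))

/-- Expected distortion `∑_{u,x} P_{UX}(u,x)·c*(u) = ∑_{u,z} min_{s'} ∑_s P(s,u,z)·d(s,s')`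
of the optimal one-shot estimator `ŝ*(u,z) = argmin_{s'} ∑_s P_{S|UZ}(s|u,z)·d(s,s')`
based on `(U,Z)`. -/
def optDistUZ [Nonempty 𝓢] (pUX : U → 𝓧 → ℝ) (pS : 𝓢 → ℝ)
    (W : 𝓧 → 𝓢 → 𝓨 × 𝓩 → ℝ) (d : 𝓢 → 𝓢 → ℝ) : ℝ :=
  ∑ u : U, ∑ z : 𝓩, Finset.univ.inf' Finset.univ_nonempty
    (fun s' : 𝓢 => ∑ s, (∑ x, ∑ y, pUX u x * pS s * W x s (y, z)) * d s s')

/-- Expected distortion `∑_x P_X(x)·E[d(S, ŝ*(X,Z)) | X = x]` of the optimal one-shot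
estimator `ŝ*(x,z) = argmin_{s'} ∑_s P_{S|XZ}(s|x,z)·d(s,s')` based on `(X,Z)`. -/
def optDistXZ [Nonempty 𝓢] (pX : 𝓧 → ℝ) (pS : 𝓢 → ℝ)
    (W : 𝓧 → 𝓢 → 𝓨 × 𝓩 → ℝ) (d : 𝓢 → 𝓢 → ℝ) : ℝ :=
  ∑ x : 𝓧, ∑ z : 𝓩, Finset.univ.inf' Finset.univ_nonempty
    (fun s' : 𝓢 => ∑ s, (pX x * pS s * ∑ y, W x s (y, z)) * d s s')

/-- Expected distortion `∑_x P_X(x)·c1(x)` of the optimal one-shot estimator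
`ŝ*(z) = argmin_{s'} ∑_s P_{S|Z}(s|z)·d(s,s')` based on `Z` alone. -/
def optDistZ [Nonempty 𝓢] (pX : 𝓧 → ℝ) (pS : 𝓢 → ℝ)
    (W : 𝓧 → 𝓢 → 𝓨 × 𝓩 → ℝ) (d : 𝓢 → 𝓢 → ℝ) : ℝ :=
  ∑ z : 𝓩, Finset.univ.inf' Finset.univ_nonempty
    (fun s' : 𝓢 => ∑ s, (∑ x, pX x * pS s * ∑ y, W x s (y, z)) * d s s')

end Rates

/-- The physically degraded broadcast channel `P_{YZ|XS}(y,z|x,s) = P_{Y|XS}(y|x,s)·P_{Z|Y}(z|y)`. -/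
def degW {𝓧 𝓢 𝓨 𝓩 : Type*} (Wy : 𝓧 → 𝓢 → 𝓨 → ℝ) (Wq : 𝓨 → 𝓩 → ℝ) :
    𝓧 → 𝓢 → 𝓨 × 𝓩 → ℝ :=
  fun x s yz => Wy x s yz.1 * Wq yz.1 yz.2

section Codes

variable {𝓧 𝓢 𝓨 𝓩 : Type*} [Fintype 𝓢] [Fintype 𝓨] [Fintype 𝓩]

/-- Probability of the i.i.d. state sequence `sv` and channel outputs `(yv, zv)`
given the input sequence `xv`. -/
def seqProb (pS : 𝓢 → ℝ) (W : 𝓧 → 𝓢 → 𝓨 × 𝓩 → ℝ) {n : ℕ}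
    (xv : Fin n → 𝓧) (sv : Fin n → 𝓢) (yv : Fin n → 𝓨) (zv : Fin n → 𝓩) : ℝ :=
  ∏ i, pS (sv i) * W (xv i) (sv i) (yv i, zv i)

/-- A `(M0, M1, n)` code for the SDMBC-DMS model: an encoder, a decoder at the
communication receiver (observing `(Y^n, S^n)`), a decoder at the sensing receiver
(observing `Z^n`) for the common message, and a state estimator at the sensing receiver. -/
structure SDMBCCode (𝓧 𝓢 𝓨 𝓩 : Type*) (n M0 M1 : ℕ) where
  enc : Fin M0 → Fin M1 → Fin n → 𝓧
  dec1 : (Fin n → 𝓨) → (Fin n → 𝓢) → Fin M0 × Fin M1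
  dec2 : (Fin n → 𝓩) → Fin M0
  est : (Fin n → 𝓩) → Fin n → 𝓢

/-- Average error probability `P_e^{(n)} = Pr{(Ŵ01,Ŵ1) ≠ (W0,W1) or Ŵ02 ≠ W0}` under
uniform messages. -/
def errProbSDMBC (pS : 𝓢 → ℝ) (W : 𝓧 → 𝓢 → 𝓨 × 𝓩 → ℝ) {n M0 M1 : ℕ}
    (c : SDMBCCode 𝓧 𝓢 𝓨 𝓩 n M0 M1) : ℝ :=
  (1 / ((M0 : ℝ) * (M1 : ℝ))) * ∑ w0 : Fin M0, ∑ w1 : Fin M1, ∑ sv : Fin n → 𝓢,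
    ∑ yv : Fin n → 𝓨, ∑ zv : Fin n → 𝓩,
      if c.dec1 yv sv ≠ (w0, w1) ∨ c.dec2 zv ≠ w0
      then seqProb pS W (c.enc w0 w1) sv yv zv else 0

/-- Expected average per-block distortion `D^{(n)} = (1/n) ∑_i E[d(S_i, Ŝ_i)]`. -/
def avgDistSDMBC (pS : 𝓢 → ℝ) (W : 𝓧 → 𝓢 → 𝓨 × 𝓩 → ℝ) (d : 𝓢 → 𝓢 → ℝ)
    {n M0 M1 : ℕ} (c : SDMBCCode 𝓧 𝓢 𝓨 𝓩 n M0 M1) : ℝ :=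
  (1 / ((M0 : ℝ) * (M1 : ℝ))) * ∑ w0 : Fin M0, ∑ w1 : Fin M1, ∑ sv : Fin n → 𝓢,
    ∑ yv : Fin n → 𝓨, ∑ zv : Fin n → 𝓩,
      seqProb pS W (c.enc w0 w1) sv yv zv *
        ((1 / (n : ℝ)) * ∑ i, d (sv i) (c.est zv i))

/-- Achievability of a rate-distortion tuple `(R0, R1, D)` for the SDMBC-DMS model:
there is a sequence of `(2^{nR0}, 2^{nR1}, n)` codes with vanishing error probability
and asymptotic distortion at most `D`. -/
def AchievableSDMBC (pS : 𝓢 → ℝ) (W : 𝓧 → 𝓢 → 𝓨 × 𝓩 → ℝ) (d : 𝓢 → 𝓢 → ℝ)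
    (R0 R1 D : ℝ) : Prop :=
  ∃ (M0 M1 : ℕ → ℕ) (c : ∀ n, SDMBCCode 𝓧 𝓢 𝓨 𝓩 n (M0 n) (M1 n)),
    (∀ n : ℕ, (2 : ℝ) ^ ((n : ℝ) * R0) ≤ (M0 n : ℝ)) ∧
    (∀ n : ℕ, (2 : ℝ) ^ ((n : ℝ) * R1) ≤ (M1 n : ℝ)) ∧
    Tendsto (fun n => errProbSDMBC pS W (c n)) atTop (nhds 0) ∧
    Filter.limsup (fun n => avgDistSDMBC pS W d (c n)) atTop ≤ D

/-- A `(M, n)` code for the point-to-point setting (blind estimation): the sensing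
receiver decodes nothing and estimates the state from `Z^n` alone. -/
structure P2PCode (𝓧 𝓢 𝓨 𝓩 : Type*) (n M : ℕ) where
  enc : Fin M → Fin n → 𝓧
  dec : (Fin n → 𝓨) → (Fin n → 𝓢) → Fin M
  est : (Fin n → 𝓩) → Fin n → 𝓢

def errProbP2P (pS : 𝓢 → ℝ) (W : 𝓧 → 𝓢 → 𝓨 × 𝓩 → ℝ) {n M : ℕ}
    (c : P2PCode 𝓧 𝓢 𝓨 𝓩 n M) : ℝ :=
  (1 / (M : ℝ)) * ∑ w : Fin M, ∑ sv : Fin n → 𝓢, ∑ yv : Fin n → 𝓨, ∑ zv : Fin n → 𝓩,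
    if c.dec yv sv ≠ w then seqProb pS W (c.enc w) sv yv zv else 0

def avgDistP2P (pS : 𝓢 → ℝ) (W : 𝓧 → 𝓢 → 𝓨 × 𝓩 → ℝ) (d : 𝓢 → 𝓢 → ℝ)
    {n M : ℕ} (c : P2PCode 𝓧 𝓢 𝓨 𝓩 n M) : ℝ :=
  (1 / (M : ℝ)) * ∑ w : Fin M, ∑ sv : Fin n → 𝓢, ∑ yv : Fin n → 𝓨, ∑ zv : Fin n → 𝓩,
    seqProb pS W (c.enc w) sv yv zv * ((1 / (n : ℝ)) * ∑ i, d (sv i) (c.est zv i))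

/-- Achievability of a rate-distortion pair `(R, D)` with blind estimation. -/
def AchievableP2P (pS : 𝓢 → ℝ) (W : 𝓧 → 𝓢 → 𝓨 × 𝓩 → ℝ) (d : 𝓢 → 𝓢 → ℝ)
    (R D : ℝ) : Prop :=
  ∃ (M : ℕ → ℕ) (c : ∀ n, P2PCode 𝓧 𝓢 𝓨 𝓩 n (M n)),
    (∀ n : ℕ, (2 : ℝ) ^ ((n : ℝ) * R) ≤ (M n : ℝ)) ∧
    Tendsto (fun n => errProbP2P pS W (c n)) atTop (nhds 0) ∧
    Filter.limsup (fun n => avgDistP2P pS W d (c n)) atTop ≤ D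

/-- A `(M, n)` code for the full-decoding setting: both receivers must decode the
whole message; the sensing receiver estimates the state from `Z^n` (and hence may use
its decoded message, which is a function of `Z^n`). -/
structure FDCode (𝓧 𝓢 𝓨 𝓩 : Type*) (n M : ℕ) where
  enc : Fin M → Fin n → 𝓧
  dec1 : (Fin n → 𝓨) → (Fin n → 𝓢) → Fin M
  dec2 : (Fin n → 𝓩) → Fin M
  est : (Fin n → 𝓩) → Fin n → 𝓢

def errProbFD (pS : 𝓢 → ℝ) (W : 𝓧 → 𝓢 → 𝓨 × 𝓩 → ℝ) {n M : ℕ}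
    (c : FDCode 𝓧 𝓢 𝓨 𝓩 n M) : ℝ :=
  (1 / (M : ℝ)) * ∑ w : Fin M, ∑ sv : Fin n → 𝓢, ∑ yv : Fin n → 𝓨, ∑ zv : Fin n → 𝓩,
    if c.dec1 yv sv ≠ w ∨ c.dec2 zv ≠ w
    then seqProb pS W (c.enc w) sv yv zv else 0

def avgDistFD (pS : 𝓢 → ℝ) (W : 𝓧 → 𝓢 → 𝓨 × 𝓩 → ℝ) (d : 𝓢 → 𝓢 → ℝ)
    {n M : ℕ} (c : FDCode 𝓧 𝓢 𝓨 𝓩 n M) : ℝ :=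
  (1 / (M : ℝ)) * ∑ w : Fin M, ∑ sv : Fin n → 𝓢, ∑ yv : Fin n → 𝓨, ∑ zv : Fin n → 𝓩,
    seqProb pS W (c.enc w) sv yv zv * ((1 / (n : ℝ)) * ∑ i, d (sv i) (c.est zv i))

/-- Achievability of a rate-distortion pair `(R, D)` with full-decoding-based estimation. -/
def AchievableFD (pS : 𝓢 → ℝ) (W : 𝓧 → 𝓢 → 𝓨 × 𝓩 → ℝ) (d : 𝓢 → 𝓢 → ℝ)
    (R D : ℝ) : Prop :=
  ∃ (M : ℕ → ℕ) (c : ∀ n, FDCode 𝓧 𝓢 𝓨 𝓩 n (M n)),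
    (∀ n : ℕ, (2 : ℝ) ^ ((n : ℝ) * R) ≤ (M n : ℝ)) ∧
    Tendsto (fun n => errProbFD pS W (c n)) atTop (nhds 0) ∧
    Filter.limsup (fun n => avgDistFD pS W d (c n)) atTop ≤ D

end Codes

/-- The binary alphabet `{0,1}` (with mod-2 arithmetic). -/
abbrev Bin : Type := ZMod 2

/-- `Bernoulli(q)` state pmf: `P(S = 1) = q`. -/
def bern (q : ℝ) : Bin → ℝ := fun s => if s = 1 then q else 1 - q

/-- Input pmf with `P(X = 0) = p`. -/
def pmfX (p : ℝ) : Bin → ℝ := fun x => if x = 0 then p else 1 - p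

/-- Hamming distortion `d(s, ŝ) = s ⊕ ŝ`. -/
def hamming : Bin → Bin → ℝ := fun s t => if s = t then 0 else 1

/-- The binary entropy function `H2(t) = −t·log2 t − (1−t)·log2 (1−t)`. -/
def H2 (t : ℝ) : ℝ := -(t * Real.logb 2 t) - (1 - t) * Real.logb 2 (1 - t)

/-- The channel of Example 1: `Y = S·X` and `Z = a·S·X + ((X + N) mod 2)` with
`N ~ Bernoulli(e)`.  Since `a ∈ (0,1)`, the value `Z` is faithfully encoded by the pair
`(S·X, (X + N) mod 2) ∈ Bin × Bin` (the real values `0, 1, a, a+1` correspond to the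
pairs `(0,0), (0,1), (1,0), (1,1)` respectively). -/
def ex1W (e : ℝ) : Bin → Bin → Bin × (Bin × Bin) → ℝ := fun x s yz =>
  (if yz.1 = s * x then 1 else 0) * (if yz.2.1 = s * x then 1 else 0) *
    (if yz.2.2 = x then 1 - e else e)

/-- The channel of Example 2 (degraded): `Y = S·X` and
`Z = a·Y + ((Y + N) mod 2)` with `N ~ Bernoulli(e)`, encoded by the pair
`(S·X, (S·X + N) mod 2) ∈ Bin × Bin`. -/
def ex2W (e : ℝ) : Bin → Bin → Bin × (Bin × Bin) → ℝ := fun x s yz =>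
  (if yz.1 = s * x then 1 else 0) * (if yz.2.1 = s * x then 1 else 0) *
    (if yz.2.2 = s * x then 1 - e else e)



/-!
Up to a term that depends only on the `𝒳`-marginal, `I(U;Z)` and `I(X;Y|U,S)` are sums over `u`
of functions of the row `P_{UX}(u, ·)` that are continuous and positively homogeneous (they are
built from `t ↦ t log t` so that the `c log c` terms cancel under scaling). Normalising the rows,
the vector (marginal with one coordinate dropped, both sums) becomes a convex combination of
points of the image of the simplex under a continuous map into a space of dimension `|𝒳| + 1`.
That image is connected, and by the Fenchel–Eggleston refinement of Carathéodory's theorem a point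
in the convex hull of a connected set in `ℝⁿ` is a convex combination of `n` of its points; these
points and weights define `P_{U'X}`.

For Fenchel–Eggleston, start from Carathéodory's affinely independent `a₀, …, aₙ` with positive
weights `ν`. The closed sets `Cᵢ = {p | i maximises coordᵢ p / νᵢ}` cover the connected set and
`aᵢ ∈ Cᵢ`, so some `p` lies in two of them, `Cᵢ` and `Cₖ`; replacing `aᵢ` and `aₖ` by `p` keeps
the point in the convex hull.
-/

open Finset Module

section ConvexHull

variable {ι E : Type*} [Fintype ι] [AddCommGroup E] [Module ℝ E]

lemma sum_smul_mem_convexHull {w : ι → ℝ} {z : ι → E} {s : Set E} (hw₀ : ∀ i, 0 ≤ w i)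
    (hw₁ : ∑ i, w i = 1) (hz : ∀ i, w i ≠ 0 → z i ∈ s) : ∑ i, w i • z i ∈ convexHull ℝ s := by
  classical
  rw [← Finset.sum_filter_ne_zero] at hw₁
  rw [← Finset.sum_filter_of_ne fun i _ h => left_ne_zero_of_smul h]
  exact (convex_convexHull ℝ s).sum_mem (fun i _ => hw₀ i) hw₁
    fun i hi => subset_convexHull ℝ s (hz i (Finset.mem_filter.1 hi).2)

lemma AffineBasis.mem_convexHull_insert_of_forall_coord_div_le (b : AffineBasis ι ℝ E)
    {ν : ι → ℝ} (hν : ∀ j, 0 < ν j) (hν₁ : ∑ j, ν j = 1) {x p : E}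
    (hx : ∑ j, ν j • b j = x) {i : ι} (hi : ∀ j, b.coord j p / ν j ≤ b.coord i p / ν i) :
    x ∈ convexHull ℝ (insert p (b '' {j | b.coord j p / ν j < b.coord i p / ν i})) := by
  set M := b.coord i p / ν i
  have hle : ∀ j, b.coord j p ≤ M * ν j := fun j => (div_le_iff₀ (hν j)).1 (hi j)
  have hM : 0 < M := by
    have := Finset.sum_le_sum fun j (_ : j ∈ univ) => hle j
    rw [b.sum_coord_apply_eq_one, ← Finset.mul_sum, hν₁] at this
    linarith
  -- `p` gets weight `1 / M`; the weights of the `b j` with `b.coord j p / ν j = M` vanish.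
  let w : Option ι → ℝ := fun o => o.elim M⁻¹ fun j => ν j - b.coord j p / M
  let z : Option ι → E := fun o => o.elim p b
  have hwz : ∑ o, w o • z o = x := by
    simp only [Fintype.sum_option, w, z, Option.elim, sub_smul, Finset.sum_sub_distrib, hx,
      div_eq_inv_mul, mul_smul, ← Finset.smul_sum, b.linear_combination_coord_eq_self]
    abel
  rw [← hwz]
  refine sum_smul_mem_convexHull (fun o => ?_) ?_ fun o ho => ?_
  · rcases o with _ | j
    · exact inv_nonneg.2 hM.le
    · exact sub_nonneg.2 ((div_le_iff₀ hM).2 (by linarith [hle j]))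
  · simp only [Fintype.sum_option, w, Option.elim, Finset.sum_sub_distrib, hν₁,
      ← Finset.sum_div, b.sum_coord_apply_eq_one]
    ring
  · rcases o with _ | j
    · exact Set.mem_insert _ _
    · refine Set.mem_insert_of_mem _ ⟨j, lt_of_le_of_ne (hi j) fun h => ho ?_, rfl⟩
      rw [div_eq_iff (hν j).ne'] at h
      simp [w, h, hM.ne']

end ConvexHull

section Connected

variable {ι E : Type*} [Fintype ι] [NormedAddCommGroup E] [NormedSpace ℝ E] [FiniteDimensional ℝ E]

lemma IsPreconnected.exists_two_argmax_coord_div {A : Set E} (hA : IsPreconnected A)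
    (b : AffineBasis ι ℝ E) (hbA : ∀ j, b j ∈ A) {ν : ι → ℝ} (hν : ∀ j, 0 < ν j)
    {i₀ i₁ : ι} (h₀₁ : i₀ ≠ i₁) :
    ∃ p ∈ A, ∃ i k, i ≠ k ∧ (∀ j, b.coord j p / ν j ≤ b.coord i p / ν i) ∧
      ∀ j, b.coord j p / ν j ≤ b.coord k p / ν k := by
  classical
  let C : ι → Set E := fun i => {p | ∀ j, b.coord j p / ν j ≤ b.coord i p / ν i}
  have hC : ∀ i, IsClosed (C i) := fun i => by
    simp only [C, Set.ofPred_forall]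
    exact isClosed_iInter fun j => isClosed_le ((continuous_barycentric_coord b j).div_const _)
      ((continuous_barycentric_coord b i).div_const _)
  have hbC : ∀ i, b i ∈ C i := fun i j => by
    rcases eq_or_ne j i with rfl | hji
    · exact le_rfl
    · simp [b.coord_apply, hji, (hν i).le]
  let D := ⋃ i ∈ ({i₀}ᶜ : Set ι), C i
  have hD : IsClosed D := (Set.toFinite _).isClosed_biUnion fun i _ => hC i
  have hcover : A ⊆ C i₀ ∪ D := fun p _ => by
    obtain ⟨i, -, hi⟩ := Finset.exists_max_image univ (fun j => b.coord j p / ν j) ⟨i₀, mem_univ _⟩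
    rcases eq_or_ne i i₀ with rfl | hi₀
    · exact Or.inl fun j => hi j (mem_univ j)
    · exact Or.inr (Set.mem_biUnion hi₀ fun j => hi j (mem_univ j))
  obtain ⟨p, hpA, hp₀, hpD⟩ := isPreconnected_closed_iff.1 hA _ _ (hC i₀) hD hcover
    ⟨b i₀, hbA i₀, hbC i₀⟩ ⟨b i₁, hbA i₁, Set.mem_biUnion h₀₁.symm (hbC i₁)⟩
  obtain ⟨k, hk, hpk⟩ := Set.mem_iUnion₂.1 hpD
  exact ⟨p, hpA, i₀, k, Ne.symm hk, hp₀, hpk⟩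

end Connected

section FenchelEggleston

variable {E : Type*} [NormedAddCommGroup E] [NormedSpace ℝ E] [FiniteDimensional ℝ E]

theorem IsPreconnected.exists_finset_card_le_finrank_mem_convexHull {A : Set E}
    (hA : IsPreconnected A) (hE : 0 < finrank ℝ E) {x : E} (hx : x ∈ convexHull ℝ A) :
    ∃ t : Finset E, ↑t ⊆ A ∧ t.card ≤ finrank ℝ E ∧ x ∈ convexHull ℝ (t : Set E) := by
  classical
  obtain ⟨ι, _, z, ν, hzA, hz, hν, hν₁, hνx⟩ := eq_pos_convex_span_of_mem_convexHull hx
  have hcard : Fintype.card ι ≤ finrank ℝ E + 1 :=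
    hz.card_le_finrank_succ.trans (Nat.succ_le_succ (Submodule.finrank_le _))
  rcases hcard.lt_or_eq with hlt | heq
  · refine ⟨univ.image z, by simpa using hzA, card_image_le.trans (by simpa using hlt), ?_⟩
    rw [← hνx]
    exact sum_smul_mem_convexHull (fun i => (hν i).le) hν₁ fun i _ => by simp
  let b : AffineBasis ι ℝ E := ⟨z, hz, hz.affineSpan_eq_top_iff_card_eq_finrank_add_one.2 heq⟩
  obtain ⟨i₀, i₁, h₀₁⟩ : ∃ i₀ i₁ : ι, i₀ ≠ i₁ :=
    Fintype.one_lt_card_iff_nontrivial.1 (by omega) |>.exists_pair_ne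
  obtain ⟨p, hpA, i, k, hik, hi, hk⟩ :=
    hA.exists_two_argmax_coord_div b (fun j => hzA ⟨j, rfl⟩) hν h₀₁
  set S := {j | b.coord j p / ν j < b.coord i p / ν i}
  refine ⟨insert p ((univ.filter (· ∈ S)).image b), ?_, ?_, ?_⟩
  · rw [coe_insert, coe_image, Set.insert_subset_iff]
    exact ⟨hpA, by rintro _ ⟨j, -, rfl⟩; exact hzA ⟨j, rfl⟩⟩
  · have hS : univ.filter (· ∈ S) ⊆ (univ.erase i).erase k := fun j hj => by
      simp only [mem_filter, S, Set.mem_ofPred_eq] at hj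
      simp only [mem_erase, mem_univ, and_true]
      exact ⟨fun h => (hk i).not_gt (h ▸ hj.2), fun h => (h ▸ hj.2).false⟩
    have := card_le_card hS
    rw [card_erase_of_mem (mem_erase.2 ⟨hik.symm, mem_univ k⟩), card_erase_of_mem (mem_univ i),
      card_univ] at this
    have := card_image_le (s := univ.filter (· ∈ S)) (f := b)
    exact (card_insert_le _ _).trans (by omega)
  · simpa using b.mem_convexHull_insert_of_forall_coord_div_le hν hν₁ hνx hi

end FenchelEggleston

lemma Finset.exists_fin_of_mem_convexHull {E : Type*} [AddCommGroup E] [Module ℝ E]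
    {t : Finset E} {x : E} (hx : x ∈ convexHull ℝ (t : Set E)) :
    ∃ (z : Fin t.card → E) (w : Fin t.card → ℝ), (∀ j, z j ∈ t) ∧ (∀ j, 0 ≤ w j) ∧
      ∑ j, w j = 1 ∧ ∑ j, w j • z j = x := by
  obtain ⟨w, hw₀, hw₁, hwx⟩ := Finset.mem_convexHull'.1 hx
  let e := t.equivFin.symm
  refine ⟨fun j => e j, fun j => w (e j), fun j => (e j).2, fun j => hw₀ _ (e j).2, ?_, ?_⟩
  · rw [e.sum_comp (fun y => w y), Finset.sum_coe_sort t w, hw₁]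
  · rw [e.sum_comp (fun y => w y • (y : E)), Finset.sum_coe_sort t (fun y => w y • y), hwx]

lemma Fintype.apply_eq_of_sum_eq_of_forall_ne {α M : Type*} [Fintype α] [AddCancelCommMonoid M]
    {f g : α → M} (hsum : ∑ x, f x = ∑ x, g x) {x₀ : α} (h : ∀ x ≠ x₀, f x = g x) :
    f x₀ = g x₀ := by
  classical
  have hrest : ∑ x ∈ univ.erase x₀, f x = ∑ x ∈ univ.erase x₀, g x :=
    Finset.sum_congr rfl fun x hx => h x (ne_of_mem_erase hx)
  rw [← add_sum_erase _ _ (mem_univ x₀), ← add_sum_erase _ _ (mem_univ x₀), hrest] at hsum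
  exact add_right_cancel hsum

section SupportLemma

variable {U 𝓧 : Type*} [Fintype U] [Fintype 𝓧]

lemma IsPMF2.sum_mem_convexHull_image_stdSimplex {E : Type*} [AddCommGroup E] [Module ℝ E]
    {Φ : (𝓧 → ℝ) → E} (hΦ : ∀ (c : ℝ) v, 0 ≤ c → Φ (c • v) = c • Φ v)
    {p : U → 𝓧 → ℝ} (hp : IsPMF2 p) :
    ∑ u, Φ (p u) ∈ convexHull ℝ (Φ '' stdSimplex ℝ 𝓧) := by
  have hmass₀ : ∀ u, 0 ≤ ∑ x, p u x := fun u => sum_nonneg fun x _ => hp.1 u x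
  have hrow : ∀ u, Φ (p u) = (∑ x, p u x) • Φ ((∑ x, p u x)⁻¹ • p u) := fun u => by
    rcases eq_or_ne (∑ x, p u x) 0 with h | h
    · have hpu : p u = 0 := funext fun x => (sum_eq_zero_iff_of_nonneg fun x _ => hp.1 u x).1 h x
        (mem_univ x)
      rw [h, zero_smul, hpu, ← zero_smul ℝ (0 : 𝓧 → ℝ), hΦ 0 0 le_rfl, zero_smul]
    · rw [← hΦ _ _ (hmass₀ u), smul_smul, mul_inv_cancel₀ h, one_smul]
  rw [sum_congr rfl fun u _ => hrow u]
  refine sum_smul_mem_convexHull hmass₀ hp.2 fun u hu => ⟨_, ⟨fun x => ?_, ?_⟩, rfl⟩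
  · exact mul_nonneg (inv_nonneg.2 (hmass₀ u)) (hp.1 u x)
  · simp [← mul_sum, inv_mul_cancel₀ hu]

variable {F : Type*} [NormedAddCommGroup F] [NormedSpace ℝ F] [FiniteDimensional ℝ F]

theorem IsPMF2.exists_fin_card_le_marginal_eq [Nonempty 𝓧] [Nontrivial F]
    {G : (𝓧 → ℝ) → F} (hG : Continuous G) (hGsmul : ∀ (c : ℝ) v, 0 ≤ c → G (c • v) = c • G v)
    {p : U → 𝓧 → ℝ} (hp : IsPMF2 p) :
    ∃ (k : ℕ) (p' : Fin k → 𝓧 → ℝ), k ≤ Fintype.card 𝓧 + finrank ℝ F - 1 ∧ IsPMF2 p' ∧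
      (∀ x, ∑ j, p' j x = ∑ u, p u x) ∧ ∑ j, G (p' j) = ∑ u, G (p u) := by
  classical
  obtain ⟨x₀⟩ := ‹Nonempty 𝓧›
  -- On the simplex the coordinate `x₀` is determined by the others; dropping it saves a dimension.
  let Φ : (𝓧 → ℝ) → ({x // x ≠ x₀} → ℝ) × F := fun q => (fun x => q x, G q)
  have hΦ : ∀ (c : ℝ) v, 0 ≤ c → Φ (c • v) = c • Φ v := fun c v hc => by
    simp only [Φ, hGsmul c v hc, Prod.smul_mk]
    rfl
  have hcard := Fintype.card_pos (α := 𝓧)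
  have hdim : finrank ℝ (({x // x ≠ x₀} → ℝ) × F) = Fintype.card 𝓧 + finrank ℝ F - 1 := by
    simp only [ne_eq, finrank_prod, finrank_fintype_fun_eq_card, Fintype.card_subtype_compl,
      Fintype.card_unique]
    omega
  have hA : IsPreconnected (Φ '' stdSimplex ℝ 𝓧) :=
    (convex_stdSimplex ℝ 𝓧).isPreconnected.image Φ (by fun_prop)
  have hdim_pos : 0 < finrank ℝ (({x // x ≠ x₀} → ℝ) × F) := by
    have := finrank_pos (R := ℝ) (M := F)
    omega
  obtain ⟨t, htA, htcard, hxt⟩ := hA.exists_finset_card_le_finrank_mem_convexHull hdim_pos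
    (hp.sum_mem_convexHull_image_stdSimplex hΦ)
  obtain ⟨z, w, hzt, hw₀, hw₁, hwz⟩ := Finset.exists_fin_of_mem_convexHull hxt
  choose q hq hqz using fun j => htA (hzt j)
  have hsum : ∑ j, Φ (w j • q j) = ∑ u, Φ (p u) := by
    simp_rw [hΦ _ _ (hw₀ _), hqz]
    exact hwz
  have hmass : ∑ j, ∑ x, (w j • q j) x = 1 := by
    simp [← mul_sum, (hq _).2, hw₁]
  have hmarg : ∀ x, ∑ j, (w j • q j) x = ∑ u, p u x := by
    have hne : ∀ x ≠ x₀, ∑ j, (w j • q j) x = ∑ u, p u x := fun x hx => by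
      simpa [Φ, Prod.fst_sum, Finset.sum_apply] using congrFun (congrArg Prod.fst hsum) ⟨x, hx⟩
    intro x
    rcases eq_or_ne x x₀ with rfl | hx
    · exact Fintype.apply_eq_of_sum_eq_of_forall_ne (by rw [sum_comm, hmass, sum_comm, hp.2]) hne
    · exact hne x hx
  refine ⟨t.card, fun j => w j • q j, htcard.trans hdim.le,
    ⟨fun j x => mul_nonneg (hw₀ j) ((hq j).1 x), hmass⟩, hmarg, ?_⟩
  simpa [Φ, Prod.snd_sum] using congrArg Prod.snd hsum

end SupportLemma

def mulLogb (t : ℝ) : ℝ := t * Real.logb 2 t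

lemma mulLogb_mul (c t : ℝ) : mulLogb (c * t) = c * mulLogb t + c * Real.logb 2 c * t := by
  rcases eq_or_ne c 0 with rfl | hc
  · simp [mulLogb]
  rcases eq_or_ne t 0 with rfl | ht
  · simp [mulLogb]
  rw [mulLogb, mulLogb, Real.logb_mul hc ht]
  ring

lemma continuous_mulLogb : Continuous mulLogb := by
  have : mulLogb = fun t => t * Real.log t / Real.log 2 := by
    funext t; rw [mulLogb, Real.logb, mul_div_assoc]
  rw [this]
  exact Real.continuous_mul_log.div_const _

section Entropy

variable {ι A B C : Type*} [Fintype ι] [Fintype A] [Fintype B] [Fintype C]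

/-- `(∑ f) · (-H(f / ∑ f))`, in bits. -/
def scaledNegEntropy (f : ι → ℝ) : ℝ := ∑ i, mulLogb (f i) - mulLogb (∑ i, f i)

/-- `(∑ q) · I(A;B)` for the joint law `q / ∑ q`, in bits. -/
def scaledMI (q : A → B → ℝ) : ℝ :=
  ∑ a, scaledNegEntropy (q a) - scaledNegEntropy (fun b => ∑ a, q a b)

lemma scaledNegEntropy_smul (c : ℝ) (f : ι → ℝ) :
    scaledNegEntropy (c • f) = c * scaledNegEntropy f := by
  simp only [scaledNegEntropy, Pi.smul_apply, smul_eq_mul, ← mul_sum, mulLogb_mul,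
    sum_add_distrib]
  ring

lemma scaledMI_smul (c : ℝ) (q : A → B → ℝ) : scaledMI (c • q) = c * scaledMI q := by
  have hcol : (fun b => ∑ a, (c • q) a b) = c • fun b => ∑ a, q a b := by
    ext b; simp [mul_sum]
  rw [scaledMI, scaledMI, hcol, scaledNegEntropy_smul]
  simp only [Pi.smul_apply, scaledNegEntropy_smul, mul_sum, mul_sub]

lemma continuous_scaledNegEntropy : Continuous (scaledNegEntropy : (ι → ℝ) → ℝ) :=
  (continuous_finsetSum _ fun i _ => continuous_mulLogb.comp (continuous_apply i)).sub
    (continuous_mulLogb.comp (continuous_finsetSum _ fun i _ => continuous_apply i))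

lemma continuous_scaledMI : Continuous (scaledMI : (A → B → ℝ) → ℝ) :=
  (continuous_finsetSum _ fun a _ => continuous_scaledNegEntropy.comp (continuous_apply a)).sub
    (continuous_scaledNegEntropy.comp (continuous_pi fun b =>
      continuous_finsetSum _ fun a _ => (continuous_apply b).comp (continuous_apply a)))

lemma sum_ne_zero_of_nonneg_of_ne_zero {f : ι → ℝ} (hf : ∀ i, 0 ≤ f i) {i : ι} (hi : f i ≠ 0) :
    ∑ j, f j ≠ 0 :=
  (sum_pos' (fun j _ => hf j) ⟨i, mem_univ i, (hf i).lt_of_ne' hi⟩).ne'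

lemma MI_eq_sum_scaledNegEntropy {q : A → B → ℝ} (hq : ∀ a b, 0 ≤ q a b) :
    MI q = ∑ a, scaledNegEntropy (q a) - ∑ b, mulLogb (∑ a, q a b) := by
  have hterm : ∀ a b, (if q a b = 0 then 0
      else q a b * Real.logb 2 (q a b / ((∑ b', q a b') * ∑ a', q a' b))) =
      mulLogb (q a b) - q a b * Real.logb 2 (∑ b', q a b') -
        q a b * Real.logb 2 (∑ a', q a' b) := fun a b => by
    split_ifs with h
    · simp [h, mulLogb]
    have hr := sum_ne_zero_of_nonneg_of_ne_zero (hq a) h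
    have hc := sum_ne_zero_of_nonneg_of_ne_zero (hq · b) h
    rw [Real.logb_div h (mul_ne_zero hr hc), Real.logb_mul hr hc, mulLogb]
    ring
  have hrow : ∑ a, ∑ b, q a b * Real.logb 2 (∑ b', q a b') = ∑ a, mulLogb (∑ b, q a b) := by
    simp only [← sum_mul, mulLogb]
  have hcol : ∑ a, ∑ b, q a b * Real.logb 2 (∑ a', q a' b) = ∑ b, mulLogb (∑ a, q a b) := by
    rw [sum_comm]
    simp only [← sum_mul, mulLogb]
  simp only [MI, hterm, sum_sub_distrib, hrow, hcol, scaledNegEntropy]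

lemma scaledMI_eq_mulLogb_add_MI {q : A → B → ℝ} (hq : ∀ a b, 0 ≤ q a b) :
    scaledMI q = mulLogb (∑ a, ∑ b, q a b) + MI q := by
  rw [MI_eq_sum_scaledNegEntropy hq, scaledMI, scaledNegEntropy, sum_comm (f := fun b a => q a b)]
  ring

lemma CMI_eq_sum_scaledMI {p : C → A → B → ℝ} (hp : ∀ c a b, 0 ≤ p c a b) :
    CMI p = ∑ c, scaledMI (p c) := by
  rw [CMI]
  refine sum_congr rfl fun c _ => ?_
  rw [scaledMI_eq_mulLogb_add_MI (hp c), MI]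
  have hterm : ∀ a b, (if p c a b = 0 then 0 else p c a b * Real.logb 2
      ((∑ a', ∑ b', p c a' b') * p c a b / ((∑ b', p c a b') * ∑ a', p c a' b))) =
      p c a b * Real.logb 2 (∑ a', ∑ b', p c a' b') + (if p c a b = 0 then 0
        else p c a b * Real.logb 2 (p c a b / ((∑ b', p c a b') * ∑ a', p c a' b))) :=
    fun a b => by
    split_ifs with h
    · simp [h]
    have hr := sum_ne_zero_of_nonneg_of_ne_zero (hp c a) h
    have hT := sum_ne_zero_of_nonneg_of_ne_zero (fun a' => sum_nonneg fun b' _ => hp c a' b') hr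
    have hc := sum_ne_zero_of_nonneg_of_ne_zero (hp c · b) h
    rw [mul_div_assoc, Real.logb_mul hT (div_ne_zero h (mul_ne_zero hr hc)), mul_add]
  simp only [hterm, sum_add_distrib, ← sum_mul, mulLogb]

end Entropy

section Rates

variable {U 𝓧 𝓢 𝓨 𝓩 : Type*} [Fintype U] [Fintype 𝓧] [Fintype 𝓢] [Fintype 𝓨] [Fintype 𝓩]

/-- `P_{Z|X}`, the state and `Y` averaged out. -/
def zChannel (pS : 𝓢 → ℝ) (W : 𝓧 → 𝓢 → 𝓨 × 𝓩 → ℝ) (x : 𝓧) (z : 𝓩) : ℝ :=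
  ∑ s, ∑ y, pS s * W x s (y, z)

/-- `P_{Y|XS}`. -/
def yChannel (W : 𝓧 → 𝓢 → 𝓨 × 𝓩 → ℝ) (x : 𝓧) (s : 𝓢) (y : 𝓨) : ℝ := ∑ z, W x s (y, z)

/- The contributions of a letter `u` with row `v = P_{UX}(u, ·)` to `I(U;Z)` (up to a term
depending only on the `𝒳`-marginal) and to `I(X;Y|U,S)`. -/
def rateIUZTerm (pS : 𝓢 → ℝ) (W : 𝓧 → 𝓢 → 𝓨 × 𝓩 → ℝ) (v : 𝓧 → ℝ) : ℝ :=
  scaledNegEntropy fun z => ∑ x, v x * zChannel pS W x z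

def rateIXY_USTerm (pS : 𝓢 → ℝ) (W : 𝓧 → 𝓢 → 𝓨 × 𝓩 → ℝ) (v : 𝓧 → ℝ) : ℝ :=
  ∑ s, scaledMI fun x y => v x * pS s * yChannel W x s y

variable {pS : 𝓢 → ℝ} {W : 𝓧 → 𝓢 → 𝓨 × 𝓩 → ℝ}

lemma rateIUZ_eq_sum_rateIUZTerm (hpS : ∀ s, 0 ≤ pS s) (hW : ∀ x s yz, 0 ≤ W x s yz)
    {p : U → 𝓧 → ℝ} (hp : ∀ u x, 0 ≤ p u x) :
    rateIUZ p pS W = ∑ u, rateIUZTerm pS W (p u) -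
      ∑ z, mulLogb (∑ x, (∑ u, p u x) * zChannel pS W x z) := by
  have hjoint : (fun u z => ∑ s, ∑ x, ∑ y, p u x * pS s * W x s (y, z)) =
      fun u z => ∑ x, p u x * zChannel pS W x z := by
    ext u z
    simp only [zChannel, mul_sum, mul_assoc]
    rw [sum_comm]
  have hK : ∀ x z, 0 ≤ zChannel pS W x z := fun x z =>
    sum_nonneg fun s _ => sum_nonneg fun y _ => mul_nonneg (hpS s) (hW x s _)
  rw [rateIUZ, hjoint, MI_eq_sum_scaledNegEntropy fun u z =>
    sum_nonneg fun x _ => mul_nonneg (hp u x) (hK x z)]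
  simp only [rateIUZTerm, sum_mul]
  rw [sum_congr rfl fun z _ => congrArg mulLogb (sum_comm ..)]

lemma rateIXY_US_eq_sum_rateIXY_USTerm (hpS : ∀ s, 0 ≤ pS s) (hW : ∀ x s yz, 0 ≤ W x s yz)
    {p : U → 𝓧 → ℝ} (hp : ∀ u x, 0 ≤ p u x) :
    rateIXY_US p pS W = ∑ u, rateIXY_USTerm pS W (p u) := by
  rw [rateIXY_US, CMI_eq_sum_scaledMI fun us x y => mul_nonneg (mul_nonneg (hp _ _) (hpS _))
    (sum_nonneg fun z _ => hW x us.2 _), Fintype.sum_prod_type]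
  rfl

lemma rateIUZTerm_smul (c : ℝ) (v : 𝓧 → ℝ) :
    rateIUZTerm pS W (c • v) = c * rateIUZTerm pS W v := by
  rw [rateIUZTerm, rateIUZTerm, ← scaledNegEntropy_smul]
  congr 1
  ext z
  simp [mul_sum, mul_assoc]

lemma rateIXY_USTerm_smul (c : ℝ) (v : 𝓧 → ℝ) :
    rateIXY_USTerm pS W (c • v) = c * rateIXY_USTerm pS W v := by
  simp only [rateIXY_USTerm, mul_sum, ← scaledMI_smul]
  refine sum_congr rfl fun s _ => congrArg scaledMI ?_
  ext x y
  simp [mul_assoc]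

lemma continuous_rateIUZTerm : Continuous (rateIUZTerm pS W) :=
  continuous_scaledNegEntropy.comp (by fun_prop)

lemma continuous_rateIXY_USTerm : Continuous (rateIXY_USTerm pS W) :=
  continuous_finsetSum _ fun s _ => continuous_scaledMI.comp (by fun_prop)

end Rates

/-- **Cardinality bound for the auxiliary random variable.**
For every finite alphabet `𝒰` and pmf `P_{UX}`, there are an alphabet `𝒰'` with
`|𝒰'| ≤ |𝒳| + 1` and a pmf `P_{U'X}` with the same `𝒳`-marginal such that
`I(U';Z) = I(U;Z)` and `I(X;Y|U',S) = I(X;Y|U,S)` (and `I(X;Y|S)` is unchanged since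
the `𝒳`-marginal is preserved); consequently the rate region
`{(R0,R1) : R0 ≤ I(U;Z), R1 ≤ I(X;Y|U,S), R0+R1 ≤ I(X;Y|S)}` is the same for
`(U,X)` and `(U',X)`. -/
theorem cardinality_bound
    {U 𝓧 𝓢 𝓨 𝓩 : Type*} [Fintype U] [Fintype 𝓧] [Fintype 𝓢] [Fintype 𝓨] [Fintype 𝓩]
    (pS : 𝓢 → ℝ) (hpS : IsPMF pS)
    (W : 𝓧 → 𝓢 → 𝓨 × 𝓩 → ℝ) (hW : IsChan2 W)
    (pUX : U → 𝓧 → ℝ) (hpUX : IsPMF2 pUX) :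
    ∃ (k : ℕ) (pU'X : Fin k → 𝓧 → ℝ), k ≤ Fintype.card 𝓧 + 1 ∧ IsPMF2 pU'X ∧
      (∀ x, ∑ u', pU'X u' x = ∑ u, pUX u x) ∧
      rateIUZ pU'X pS W = rateIUZ pUX pS W ∧
      rateIXY_US pU'X pS W = rateIXY_US pUX pS W ∧
      {r : ℝ × ℝ | r.1 ≤ rateIUZ pU'X pS W ∧ r.2 ≤ rateIXY_US pU'X pS W ∧
          r.1 + r.2 ≤ rateIXY_S (fun x => ∑ u', pU'X u' x) pS W} =
        {r : ℝ × ℝ | r.1 ≤ rateIUZ pUX pS W ∧ r.2 ≤ rateIXY_US pUX pS W ∧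
          r.1 + r.2 ≤ rateIXY_S (fun x => ∑ u, pUX u x) pS W} := by
  have : Nonempty 𝓧 := by
    by_contra h
    simpa [not_nonempty_iff.1 h] using hpUX.2
  have hW₀ : ∀ x s yz, 0 ≤ W x s yz := fun x s => (hW x s).1
  obtain ⟨k, p', hk, hp', hmarg, hG⟩ := hpUX.exists_fin_card_le_marginal_eq
    (G := fun v => (rateIUZTerm pS W v, rateIXY_USTerm pS W v))
    (continuous_rateIUZTerm.prodMk continuous_rateIXY_USTerm)
    fun c v _ => by simp [rateIUZTerm_smul, rateIXY_USTerm_smul]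
  have hIUZ : rateIUZ p' pS W = rateIUZ pUX pS W := by
    rw [rateIUZ_eq_sum_rateIUZTerm hpS.1 hW₀ hp'.1, rateIUZ_eq_sum_rateIUZTerm hpS.1 hW₀ hpUX.1]
    simp_rw [hmarg]
    simpa [Prod.fst_sum] using congrArg Prod.fst hG
  have hIXY : rateIXY_US p' pS W = rateIXY_US pUX pS W := by
    rw [rateIXY_US_eq_sum_rateIXY_USTerm hpS.1 hW₀ hp'.1,
      rateIXY_US_eq_sum_rateIXY_USTerm hpS.1 hW₀ hpUX.1]
    simpa [Prod.snd_sum] using congrArg Prod.snd hG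
  refine ⟨k, p', by simpa using hk, hp', hmarg, hIUZ, hIXY, ?_⟩
  rw [hIUZ, hIXY, funext hmarg]
end
end

section
/- Equivalence of three rate regions. Fix finite alphabets 𝒳, 𝒮, 𝒴, 𝒵, a state pmf P_S, and a channel law P_{YZ|XS}. For a pmf P_{UX} on 𝒰 × 𝒳 (𝒰 a finite alphabet), let the joint law of (S, U, X, Y, Z) be P_{UX} · P_S · P_{YZ|XS}. Define the sets of nonnegative rate pairs: 𝒜 = ⋃_{P_{UX}} {(R0, R1) : R0 ≤ I(U; Z), R1 ≤ I(X; Y | U, S), R0 + R1 ≤ I(X; Y | S)}, ℬ = ⋃_{P_{UX}} {(R0, R1) : R0 ≤ I(U; Z), R0 + R1 ≤ I(X; Y | U, S) + I(U; Z), R0 + R1 ≤ I(X; Y | S)}, and 𝒞 = ⋃_{P_{UX}} {(R0, R1) : R0 ≤ min{I(U; Z), I(U; Y | S)}, R1 ≤ I(X; Y | U, S)}. Then 𝒜 = ℬ = 𝒞. -/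
open scoped BigOperators
open Filter

noncomputable section

/-! For a fixed input law `P_X`, the triples `(I(U;Z), I(U;Y|S), I(X;Y|U,S))` over auxiliaries
`U`, lowered coordinatewise, form a convex set: time sharing between two auxiliaries with the
same `X`-marginal (their disjoint union, weighted by `l` and `1 - l`) mixes all three quantities
linearly. The set contains `(0, 0, I(X;Y|S))` (a constant `U`) and `(I(U;Z), I(X;Y|S), 0)`
(replacing `U` by `(U, X)`, which by the chain rule can only increase `I(U;Z)`), and every triple
satisfies `I(U;Y|S) + I(X;Y|U,S) = I(X;Y|S)`. Each inclusion between the regions then follows by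
mixing `U` with one of these two points with a suitable weight. -/

open Finset

section CMI

variable {C C' A A' A₁ A₂ B U : Type*} [Fintype C] [Fintype C'] [Fintype A] [Fintype A']
  [Fintype A₁] [Fintype A₂] [Fintype B] [Fintype U]

/-- The guard `p = 0` in the definition of `CMI` is redundant, since `0 * _ = 0`. -/
lemma CMI_eq_sum (p : C → A → B → ℝ) :
    CMI p = ∑ c, ∑ a, ∑ b, p c a b * Real.logb 2
      ((∑ a', ∑ b', p c a' b') * p c a b / ((∑ b', p c a b') * (∑ a', p c a' b))) := by
  unfold CMI
  refine sum_congr rfl fun c _ => sum_congr rfl fun a _ => sum_congr rfl fun b _ => ?_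
  split_ifs with h <;> simp [h]

lemma MI_eq_CMI_unit (p : A → B → ℝ) (hp : ∑ a, ∑ b, p a b = 1) :
    MI p = CMI (fun (_ : Unit) => p) := by
  rw [CMI_eq_sum, Fintype.sum_unique, hp]
  unfold MI
  refine sum_congr rfl fun a _ => sum_congr rfl fun b _ => ?_
  split_ifs with h <;> simp [h]

/-- Gibbs' inequality, termwise from `log t ≥ 1 - t⁻¹`. -/
lemma sum_mul_log_ratio_nonneg (q : A → B → ℝ) (hq : ∀ a b, 0 ≤ q a b) :
    0 ≤ ∑ a, ∑ b, q a b *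
      Real.log ((∑ a', ∑ b', q a' b') * q a b / ((∑ b', q a b') * (∑ a', q a' b))) := by
  set T := ∑ a', ∑ b', q a' b'
  have hrow : ∀ a, 0 ≤ ∑ b', q a b' := fun a => sum_nonneg fun b _ => hq a b
  have hcol : ∀ b, 0 ≤ ∑ a', q a' b := fun b => sum_nonneg fun a _ => hq a b
  rcases (sum_nonneg fun a _ => hrow a : 0 ≤ T).eq_or_lt with hT | hT
  · have hzero : ∀ a b, q a b = 0 := fun a b =>
      (sum_eq_zero_iff_of_nonneg (fun b _ => hq a b)).1
        ((sum_eq_zero_iff_of_nonneg fun a _ => hrow a).1 hT.symm a (mem_univ a)) b (mem_univ b)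
    simp [hzero]
  have hterm : ∀ a b, q a b - (∑ b', q a b') * (∑ a', q a' b) / T ≤
      q a b * Real.log (T * q a b / ((∑ b', q a b') * (∑ a', q a' b))) := by
    intro a b
    rcases (hq a b).eq_or_lt with h0 | hpos
    · simpa [← h0] using div_nonneg (mul_nonneg (hrow a) (hcol b)) hT.le
    have hr : 0 < ∑ b', q a b' := (single_le_sum (fun b _ => hq a b) (mem_univ b)).trans_lt' hpos
    have hc : 0 < ∑ a', q a' b := (single_le_sum (fun a _ => hq a b) (mem_univ a)).trans_lt' hpos
    have hlog := Real.one_sub_inv_le_log_of_pos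
      (show 0 < T * q a b / ((∑ b', q a b') * (∑ a', q a' b)) by positivity)
    calc q a b - (∑ b', q a b') * (∑ a', q a' b) / T
        = q a b * (1 - (T * q a b / ((∑ b', q a b') * (∑ a', q a' b)))⁻¹) := by
          field_simp
      _ ≤ _ := mul_le_mul_of_nonneg_left hlog hpos.le
  have hsum : ∑ a, ∑ b, (q a b - (∑ b', q a b') * (∑ a', q a' b) / T) = 0 := by
    simp only [sum_sub_distrib, ← sum_div, ← mul_sum, ← sum_mul]
    rw [sum_comm (f := fun b a => q a b), mul_div_assoc, div_self hT.ne', mul_one,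
      sub_self]
  exact hsum ▸ sum_le_sum fun a _ => sum_le_sum fun b _ => hterm a b

lemma CMI_nonneg (p : C → A → B → ℝ) (hp : ∀ c a b, 0 ≤ p c a b) : 0 ≤ CMI p := by
  rw [CMI_eq_sum]
  refine sum_nonneg fun c _ => ?_
  simp only [Real.logb, mul_div_assoc', ← sum_div]
  exact div_nonneg (sum_mul_log_ratio_nonneg (p c) (hp c)) (Real.log_nonneg one_le_two)

lemma CMI_comp_left (p : C → A → B → ℝ) (e : C' ≃ C) : CMI (fun c => p (e c)) = CMI p := by
  simp only [CMI_eq_sum]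
  exact Fintype.sum_equiv e _ _ fun _ => rfl

lemma CMI_comp_mid (p : C → A → B → ℝ) (e : A' ≃ A) :
    CMI (fun c a b => p c (e a) b) = CMI p := by
  simp only [CMI_eq_sum]
  refine sum_congr rfl fun c _ => ?_
  have hcol : ∀ b, ∑ a, p c (e a) b = ∑ a, p c a b := fun b => e.sum_comp (p c · b)
  have htot : ∑ a, ∑ b, p c (e a) b = ∑ a, ∑ b, p c a b := e.sum_comp (fun a => ∑ b, p c a b)
  simp only [hcol, htot]
  exact Fintype.sum_equiv e _ _ fun _ => rfl

lemma CMI_sum_left (p : C ⊕ C' → A → B → ℝ) :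
    CMI p = CMI (fun c => p (Sum.inl c)) + CMI (fun c => p (Sum.inr c)) := by
  simp only [CMI_eq_sum, Fintype.sum_sum_type]

lemma CMI_const_mul (l : ℝ) (p : C → A → B → ℝ) :
    CMI (fun c a b => l * p c a b) = l * CMI p := by
  rcases eq_or_ne l 0 with rfl | hl
  · simp [CMI_eq_sum]
  simp only [CMI_eq_sum, ← mul_sum, mul_assoc]
  congr 1
  refine sum_congr rfl fun c _ => sum_congr rfl fun a _ => sum_congr rfl fun b _ => ?_
  congr 2
  rw [show ∀ T m n x : ℝ,
      l * (T * (l * x)) / (l * (m * (l * n))) = l * l * (T * x) / (l * l * (m * n))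
    from fun _ _ _ _ => by ring, mul_div_mul_left _ _ (mul_ne_zero hl hl)]

lemma mul_mul_logb_ratio (l x T m n : ℝ) :
    l * x * Real.logb 2 (T * (l * x) / (l * m * n)) = l * (x * Real.logb 2 (T * x / (m * n))) := by
  rcases eq_or_ne l 0 with rfl | hl
  · simp
  rw [mul_assoc, mul_left_comm T, mul_assoc l m, mul_div_mul_left _ _ hl]

/-- The equal `b`-marginals make the column sums and totals of the mixture those of `p`, so each
term merely scales. -/
lemma CMI_sum_elim_mid (l : ℝ) (p : C → A → B → ℝ) (p' : C → A' → B → ℝ)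
    (hcol : ∀ c b, ∑ a, p c a b = ∑ a, p' c a b) :
    CMI (fun c => Sum.elim (fun a b => l * p c a b) (fun a b => (1 - l) * p' c a b))
      = l * CMI p + (1 - l) * CMI p' := by
  have htot : ∀ c, ∑ a, ∑ b, p' c a b = ∑ a, ∑ b, p c a b := fun c => by
    rw [sum_comm, sum_comm (f := fun a b => p c a b)]
    exact sum_congr rfl fun b _ => (hcol c b).symm
  have hrow : ∀ (l : ℝ) (q : C → A → B → ℝ) c a, ∑ b, l * q c a b = l * ∑ b, q c a b :=
    fun _ _ _ _ => (mul_sum ..).symm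
  have hrow' : ∀ (l : ℝ) (q : C → A' → B → ℝ) c a, ∑ b, l * q c a b = l * ∑ b, q c a b :=
    fun _ _ _ _ => (mul_sum ..).symm
  simp only [CMI_eq_sum, Fintype.sum_sum_type, Sum.elim_inl, Sum.elim_inr, hrow, hrow', ← hcol,
    htot, mul_mul_logb_ratio, ← mul_sum, ← add_mul, add_sub_cancel, one_mul]
  rw [sum_add_distrib, mul_sum, mul_sum]

lemma mul_logb_ratio_eq_add {q m nc n Tc T : ℝ} (hq : 0 ≤ q) (hm : q ≤ m) (hTc : m ≤ Tc)
    (hT : Tc ≤ T) (hnc : q ≤ nc) (hn : nc ≤ n) :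
    q * Real.logb 2 (T * q / (m * n))
      = q * Real.logb 2 (T * nc / (Tc * n)) + q * Real.logb 2 (Tc * q / (m * nc)) := by
  rcases hq.eq_or_lt with rfl | hq
  · simp
  have : 0 < m := hq.trans_le hm
  have : 0 < nc := hq.trans_le hnc
  have : 0 < Tc := by linarith
  have : 0 < T := by linarith
  have : 0 < n := by linarith
  rw [← mul_add, ← Real.logb_mul (by positivity) (by positivity)]
  congr 2
  field_simp

/-- The chain rule `I(A₁A₂; B | C) = I(A₁; B | C) + I(A₂; B | C, A₁)`. -/
lemma CMI_prod_mid_eq_add (q : C → A₁ → A₂ → B → ℝ) (hq : ∀ c a₁ a₂ b, 0 ≤ q c a₁ a₂ b) :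
    CMI (fun c (a : A₁ × A₂) b => q c a.1 a.2 b)
      = CMI (fun c a₁ b => ∑ a₂, q c a₁ a₂ b)
        + CMI (fun (ca : C × A₁) a₂ b => q ca.1 ca.2 a₂ b) := by
  have hswap : ∀ c a₁, ∑ b, ∑ a₂, q c a₁ a₂ b = ∑ a₂, ∑ b, q c a₁ a₂ b := fun _ _ => sum_comm
  simp only [CMI_eq_sum, Fintype.sum_prod_type, hswap, ← sum_add_distrib]
  refine sum_congr rfl fun c _ => sum_congr rfl fun a₁ _ => ?_
  conv_rhs => enter [1, 2, b]; rw [sum_mul]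
  conv_rhs => arg 1; rw [sum_comm]
  rw [← sum_add_distrib]
  refine sum_congr rfl fun a₂ _ => ?_
  rw [← sum_add_distrib]
  refine sum_congr rfl fun b _ => ?_
  exact mul_logb_ratio_eq_add (hq c a₁ a₂ b) (single_le_sum (fun b _ => hq c a₁ a₂ b) (mem_univ b))
    (single_le_sum (fun a _ => sum_nonneg fun b _ => hq c a₁ a b) (mem_univ a₂))
    (single_le_sum (fun a _ => sum_nonneg fun a₂ _ => sum_nonneg fun b _ => hq c a a₂ b)
      (mem_univ a₁))
    (single_le_sum (fun a₂ _ => hq c a₁ a₂ b) (mem_univ a₂))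
    (single_le_sum (fun a _ => sum_nonneg fun a₂ _ => hq c a a₂ b) (mem_univ a₁))

/-- `I(U A; B | C) = I(A; B | C)` when `B` depends on `(U, A)` only through `A`. -/
lemma CMI_prod_mid_mul (w : U → A → ℝ) (g : C → A → B → ℝ) :
    CMI (fun c (ua : U × A) b => w ua.1 ua.2 * g c ua.2 b)
      = CMI (fun c a b => (∑ u, w u a) * g c a b) := by
  have hmerge : ∀ f : A → ℝ, ∑ u, ∑ a, w u a * f a = ∑ a, (∑ u, w u a) * f a := fun f => by
    simp only [sum_mul]
    exact sum_comm
  simp only [CMI_eq_sum, Fintype.sum_prod_type, ← mul_sum, hmerge, mul_mul_logb_ratio]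

end CMI

section Auxiliary

variable {C U U' 𝓧 B : Type*} [Fintype C] [Fintype U] [Fintype U'] [Fintype 𝓧] [Fintype B]

/-! For a joint law `p u x` of an auxiliary `U` and the input `X`, and a kernel `K c x b` giving the
joint law of `(C, B)` given `X = x` with `C` independent of `(U, X)`: -/

/-- `I(U; B | C)`. -/
def auxInfo (p : U → 𝓧 → ℝ) (K : C → 𝓧 → B → ℝ) : ℝ :=
  CMI (fun c u b => ∑ x, p u x * K c x b)

/-- `I(X; B | U, C)`. -/
def condInputInfo (p : U → 𝓧 → ℝ) (K : C → 𝓧 → B → ℝ) : ℝ :=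
  CMI (fun (uc : U × C) x b => p uc.1 x * K uc.2 x b)

/-- `I(X; B | C)` for the input law `pX`. -/
def inputInfo (pX : 𝓧 → ℝ) (K : C → 𝓧 → B → ℝ) : ℝ :=
  CMI (fun c x b => pX x * K c x b)

def timeShare (l : ℝ) (p : U → 𝓧 → ℝ) (p' : U' → 𝓧 → ℝ) : U ⊕ U' → 𝓧 → ℝ :=
  Sum.elim (fun u x => l * p u x) (fun u x => (1 - l) * p' u x)

/-- The auxiliary `(U, X)`. -/
def withInput [DecidableEq 𝓧] (p : U → 𝓧 → ℝ) : U × 𝓧 → 𝓧 → ℝ :=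
  fun ux x => if x = ux.2 then p ux.1 x else 0

variable (K : C → 𝓧 → B → ℝ)

lemma auxInfo_nonneg {p : U → 𝓧 → ℝ} (hp : ∀ u x, 0 ≤ p u x) (hK : ∀ c x b, 0 ≤ K c x b) :
    0 ≤ auxInfo p K :=
  CMI_nonneg _ fun c u b => sum_nonneg fun x _ => mul_nonneg (hp u x) (hK c x b)

lemma condInputInfo_nonneg {p : U → 𝓧 → ℝ} (hp : ∀ u x, 0 ≤ p u x)
    (hK : ∀ c x b, 0 ≤ K c x b) : 0 ≤ condInputInfo p K :=
  CMI_nonneg _ fun uc x b => mul_nonneg (hp uc.1 x) (hK uc.2 x b)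

lemma auxInfo_comp (p : U → 𝓧 → ℝ) (e : U' ≃ U) :
    auxInfo (fun u => p (e u)) K = auxInfo p K :=
  CMI_comp_mid (fun c u b => ∑ x, p u x * K c x b) e

lemma condInputInfo_comp (p : U → 𝓧 → ℝ) (e : U' ≃ U) :
    condInputInfo (fun u => p (e u)) K = condInputInfo p K :=
  CMI_comp_left (fun (uc : U × C) x b => p uc.1 x * K uc.2 x b) (e.prodCongr (Equiv.refl C))

lemma condInputInfo_unique [Unique U] (p : U → 𝓧 → ℝ) :
    condInputInfo p K = inputInfo (p default) K := by
  rw [condInputInfo, ← CMI_comp_left _ (Equiv.uniqueProd C U).symm]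
  rfl

lemma auxInfo_timeShare (l : ℝ) (p : U → 𝓧 → ℝ) (p' : U' → 𝓧 → ℝ)
    (hmarg : ∀ x, ∑ u, p u x = ∑ u, p' u x) :
    auxInfo (timeShare l p p') K = l * auxInfo p K + (1 - l) * auxInfo p' K := by
  have hsplit : (fun c v b => ∑ x, timeShare l p p' v x * K c x b) = fun c =>
      Sum.elim (fun u b => l * ∑ x, p u x * K c x b)
        (fun u b => (1 - l) * ∑ x, p' u x * K c x b) := by
    ext c (u | u) b <;> simp [timeShare, mul_sum, mul_assoc]
  have hcol : ∀ c b, ∑ u, ∑ x, p u x * K c x b = ∑ u, ∑ x, p' u x * K c x b := fun c b => by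
    simp only [sum_comm (γ := U), sum_comm (γ := U'), ← sum_mul, hmarg]
  rw [auxInfo, hsplit, CMI_sum_elim_mid l _ _ hcol, auxInfo, auxInfo]

lemma condInputInfo_timeShare (l : ℝ) (p : U → 𝓧 → ℝ) (p' : U' → 𝓧 → ℝ) :
    condInputInfo (timeShare l p p') K = l * condInputInfo p K + (1 - l) * condInputInfo p' K := by
  rw [condInputInfo, ← CMI_comp_left _ (Equiv.sumProdDistrib U U' C).symm, CMI_sum_left,
    condInputInfo, condInputInfo, ← CMI_const_mul, ← CMI_const_mul]
  congr 1 <;> congr 1 <;> ext ⟨u, c⟩ x b <;> simp [timeShare, mul_assoc]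

variable {K}

lemma inputInfo_sum_eq_add {p : U → 𝓧 → ℝ} (hp : ∀ u x, 0 ≤ p u x)
    (hK : ∀ c x b, 0 ≤ K c x b) :
    inputInfo (fun x => ∑ u, p u x) K = auxInfo p K + condInputInfo p K :=
  calc inputInfo (fun x => ∑ u, p u x) K
      = CMI (fun c (ux : U × 𝓧) b => p ux.1 ux.2 * K c ux.2 b) := (CMI_prod_mid_mul p K).symm
    _ = auxInfo p K + CMI (fun (cu : C × U) x b => p cu.2 x * K cu.1 x b) :=
        CMI_prod_mid_eq_add (fun c u x b => p u x * K c x b) fun c u x b =>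
          mul_nonneg (hp u x) (hK c x b)
    _ = auxInfo p K + condInputInfo p K := by
        rw [condInputInfo, ← CMI_comp_left _ (Equiv.prodComm C U)]
        rfl

lemma auxInfo_withInput [DecidableEq 𝓧] (p : U → 𝓧 → ℝ) :
    auxInfo (withInput p) K = inputInfo (fun x => ∑ u, p u x) K := by
  simp only [auxInfo, withInput, ite_mul, zero_mul, sum_ite_eq', mem_univ, if_true]
  exact CMI_prod_mid_mul p K

lemma auxInfo_le_auxInfo_withInput [DecidableEq 𝓧] {p : U → 𝓧 → ℝ} (hp : ∀ u x, 0 ≤ p u x)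
    (hK : ∀ c x b, 0 ≤ K c x b) : auxInfo p K ≤ auxInfo (withInput p) K := by
  rw [auxInfo_withInput, inputInfo_sum_eq_add hp hK]
  exact le_add_of_nonneg_right (condInputInfo_nonneg K hp hK)

end Auxiliary

section PMF

variable {U U' 𝓧 : Type*} {p : U → 𝓧 → ℝ}

lemma withInput_nonneg [DecidableEq 𝓧] (hp : ∀ u x, 0 ≤ p u x) (ux : U × 𝓧) (x : 𝓧) :
    0 ≤ withInput p ux x := by
  unfold withInput
  split_ifs
  exacts [hp _ _, le_rfl]

variable [Fintype U] [Fintype U']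

lemma sum_timeShare {p' : U' → 𝓧 → ℝ} (l : ℝ) (hmarg : ∀ x, ∑ u, p' u x = ∑ u, p u x) (x : 𝓧) :
    ∑ v, timeShare l p p' v x = ∑ u, p u x := by
  simp only [timeShare, Fintype.sum_sum_type, Sum.elim_inl, Sum.elim_inr, ← mul_sum, hmarg]
  ring

variable [Fintype 𝓧]

lemma IsPMF2.marginal (hp : IsPMF2 p) : IsPMF (fun x => ∑ u, p u x) :=
  ⟨fun x => sum_nonneg fun u _ => hp.1 u x, sum_comm.trans hp.2⟩

lemma IsPMF2.comp_equiv (hp : IsPMF2 p) (e : U' ≃ U) : IsPMF2 (fun u => p (e u)) :=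
  ⟨fun u => hp.1 (e u), (e.sum_comp fun u => ∑ x, p u x).trans hp.2⟩

lemma IsPMF.const {pX : 𝓧 → ℝ} (hpX : IsPMF pX) : IsPMF2 (fun (_ : Unit) => pX) :=
  ⟨fun _ => hpX.1, by simpa using hpX.2⟩

lemma IsPMF2.timeShare {p' : U' → 𝓧 → ℝ} (hp : IsPMF2 p) (hp' : IsPMF2 p') {l : ℝ} (hl₀ : 0 ≤ l)
    (hl₁ : l ≤ 1) : IsPMF2 (timeShare l p p') := by
  refine ⟨fun v x => ?_, ?_⟩
  · rcases v with u | u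
    · exact mul_nonneg hl₀ (hp.1 u x)
    · exact mul_nonneg (sub_nonneg.2 hl₁) (hp'.1 u x)
  · simp only [_root_.timeShare, Fintype.sum_sum_type, Sum.elim_inl, Sum.elim_inr, ← mul_sum,
      hp.2, hp'.2]
    ring

lemma sum_withInput [DecidableEq 𝓧] (p : U → 𝓧 → ℝ) (x : 𝓧) :
    ∑ ux, withInput p ux x = ∑ u, p u x := by
  simp [withInput, Fintype.sum_prod_type]

lemma IsPMF2.withInput [DecidableEq 𝓧] (hp : IsPMF2 p) : IsPMF2 (withInput p) :=
  ⟨withInput_nonneg hp.1, by rw [sum_comm]; simp only [sum_withInput]; exact sum_comm.trans hp.2⟩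

end PMF

section Rates

variable {U 𝓧 𝓢 𝓨 𝓩 : Type*} [Fintype 𝓢] [Fintype 𝓨] [Fintype 𝓩]
  {pS : 𝓢 → ℝ} {W : 𝓧 → 𝓢 → 𝓨 × 𝓩 → ℝ}

variable (pS W) in
/-- The joint law of `(S, Y)` given `X = x`. -/
def kernelSY : 𝓢 → 𝓧 → 𝓨 → ℝ := fun s x y => pS s * ∑ z, W x s (y, z)

variable (pS W) in
/-- The law of `Z` given `X = x`, with a trivial conditioning variable. -/
def kernelZ : Unit → 𝓧 → 𝓩 → ℝ := fun _ x z => ∑ s, ∑ y, pS s * W x s (y, z)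

lemma kernelSY_nonneg (hpS : IsPMF pS) (hW : IsChan2 W) (s : 𝓢) (x : 𝓧) (y : 𝓨) :
    0 ≤ kernelSY pS W s x y :=
  mul_nonneg (hpS.1 s) (sum_nonneg fun z _ => (hW x s).1 (y, z))

lemma kernelZ_nonneg (hpS : IsPMF pS) (hW : IsChan2 W) (c : Unit) (x : 𝓧) (z : 𝓩) :
    0 ≤ kernelZ pS W c x z :=
  sum_nonneg fun s _ => sum_nonneg fun y _ => mul_nonneg (hpS.1 s) ((hW x s).1 (y, z))

lemma sum_kernelZ (hpS : IsPMF pS) (hW : IsChan2 W) (x : 𝓧) : ∑ z, kernelZ pS W () x z = 1 := by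
  have hWx : ∀ s, ∑ y, ∑ z, W x s (y, z) = 1 := fun s => by
    rw [← Fintype.sum_prod_type', (hW x s).2]
  simp only [kernelZ]
  rw [sum_comm]
  simp only [sum_comm (γ := 𝓩), ← mul_sum, hWx, mul_one, hpS.2]

variable [Fintype U] [Fintype 𝓧]

lemma rateIUY_S_eq (p : U → 𝓧 → ℝ) : rateIUY_S p pS W = auxInfo p (kernelSY pS W) := by
  simp only [rateIUY_S, auxInfo, kernelSY, mul_assoc]

lemma rateIXY_US_eq (p : U → 𝓧 → ℝ) : rateIXY_US p pS W = condInputInfo p (kernelSY pS W) := by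
  simp only [rateIXY_US, condInputInfo, kernelSY, mul_assoc]

lemma rateIXY_S_eq (pX : 𝓧 → ℝ) : rateIXY_S pX pS W = inputInfo pX (kernelSY pS W) := by
  simp only [rateIXY_S, inputInfo, kernelSY, mul_assoc]

lemma rateIUZ_eq (hpS : IsPMF pS) (hW : IsChan2 W) {p : U → 𝓧 → ℝ} (hp : IsPMF2 p) :
    rateIUZ p pS W = auxInfo p (kernelZ pS W) := by
  have hjoint : (fun u z => ∑ s, ∑ x, ∑ y, p u x * pS s * W x s (y, z))
      = fun u z => ∑ x, p u x * kernelZ pS W () x z := by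
    ext u z
    rw [sum_comm]
    simp only [kernelZ, mul_sum, mul_assoc]
  have hmass : ∑ u, ∑ z, ∑ x, p u x * kernelZ pS W () x z = 1 := by
    simp only [sum_comm (γ := 𝓩), ← mul_sum, sum_kernelZ hpS hW, mul_one, hp.2]
  rw [rateIUZ, hjoint, MI_eq_CMI_unit _ hmass]
  rfl

end Rates

section Attainable

variable {𝓧 𝓢 𝓨 𝓩 : Type*} [Fintype 𝓧] [Fintype 𝓢] [Fintype 𝓨] [Fintype 𝓩]
  {pS : 𝓢 → ℝ} {W : 𝓧 → 𝓢 → 𝓨 × 𝓩 → ℝ}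

lemma rateIXY_S_marginal_eq_add (hpS : IsPMF pS) (hW : IsChan2 W) {U : Type*} [Fintype U]
    {p : U → 𝓧 → ℝ} (hp : IsPMF2 p) :
    rateIXY_S (fun x => ∑ u, p u x) pS W = rateIUY_S p pS W + rateIXY_US p pS W := by
  rw [rateIXY_S_eq, rateIUY_S_eq, rateIXY_US_eq, inputInfo_sum_eq_add hp.1 (kernelSY_nonneg hpS hW)]

variable (pS W) in
/-- `(a, b, c)` lies below `(I(U;Z), I(U;Y|S), I(X;Y|U,S))` for some auxiliary `U` whose joint law
with `X` has `X`-marginal `pX`. -/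
def AuxRatesAttainable (pX : 𝓧 → ℝ) (a b c : ℝ) : Prop :=
  ∃ (k : ℕ) (p : Fin k → 𝓧 → ℝ), IsPMF2 p ∧ (fun x => ∑ u, p u x) = pX ∧
    a ≤ rateIUZ p pS W ∧ b ≤ rateIUY_S p pS W ∧ c ≤ rateIXY_US p pS W

namespace AuxRatesAttainable

variable {pX : 𝓧 → ℝ} {a b c a' b' c' : ℝ}

lemma mono (h : AuxRatesAttainable pS W pX a b c) (ha : a' ≤ a) (hb : b' ≤ b) (hc : c' ≤ c) :
    AuxRatesAttainable pS W pX a' b' c' := by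
  obtain ⟨k, p, hp, hpX, ha₀, hb₀, hc₀⟩ := h
  exact ⟨k, p, hp, hpX, ha.trans ha₀, hb.trans hb₀, hc.trans hc₀⟩

lemma of_isPMF2 (hpS : IsPMF pS) (hW : IsChan2 W) {V : Type*} [Fintype V] {p : V → 𝓧 → ℝ}
    (hp : IsPMF2 p) :
    AuxRatesAttainable pS W (fun x => ∑ v, p v x)
      (rateIUZ p pS W) (rateIUY_S p pS W) (rateIXY_US p pS W) := by
  set e := (Fintype.equivFin V).symm
  refine ⟨Fintype.card V, fun i => p (e i), hp.comp_equiv e,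
    funext fun x => e.sum_comp (p · x), ?_, ?_, ?_⟩
  · rw [rateIUZ_eq hpS hW hp, rateIUZ_eq hpS hW (hp.comp_equiv e), auxInfo_comp]
  · rw [rateIUY_S_eq, rateIUY_S_eq, auxInfo_comp]
  · rw [rateIXY_US_eq, rateIXY_US_eq, condInputInfo_comp]

lemma const (hpS : IsPMF pS) (hW : IsChan2 W) (hpX : IsPMF pX) :
    AuxRatesAttainable pS W pX 0 0 (rateIXY_S pX pS W) := by
  have h := of_isPMF2 hpS hW hpX.const
  simp only [Finset.univ_unique, sum_singleton] at h
  refine h.mono ?_ ?_ ?_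
  · rw [rateIUZ_eq hpS hW hpX.const]
    exact auxInfo_nonneg _ (fun _ => hpX.1) (kernelZ_nonneg hpS hW)
  · rw [rateIUY_S_eq]
    exact auxInfo_nonneg _ (fun _ => hpX.1) (kernelSY_nonneg hpS hW)
  · rw [rateIXY_US_eq, condInputInfo_unique, rateIXY_S_eq]

lemma withInput (hpS : IsPMF pS) (hW : IsChan2 W) {k : ℕ} {p : Fin k → 𝓧 → ℝ} (hp : IsPMF2 p) :
    AuxRatesAttainable pS W (fun x => ∑ u, p u x)
      (rateIUZ p pS W) (rateIXY_S (fun x => ∑ u, p u x) pS W) 0 := by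
  classical
  have h := of_isPMF2 hpS hW hp.withInput
  simp only [sum_withInput] at h
  refine h.mono ?_ ?_ ?_
  · rw [rateIUZ_eq hpS hW hp, rateIUZ_eq hpS hW hp.withInput]
    exact auxInfo_le_auxInfo_withInput hp.1 (kernelZ_nonneg hpS hW)
  · rw [rateIUY_S_eq, auxInfo_withInput, rateIXY_S_eq]
  · rw [rateIXY_US_eq]
    exact condInputInfo_nonneg _ (withInput_nonneg hp.1) (kernelSY_nonneg hpS hW)

lemma convex (hpS : IsPMF pS) (hW : IsChan2 W) (h : AuxRatesAttainable pS W pX a b c)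
    (h' : AuxRatesAttainable pS W pX a' b' c') {l : ℝ} (hl₀ : 0 ≤ l) (hl₁ : l ≤ 1) :
    AuxRatesAttainable pS W pX (l * a + (1 - l) * a') (l * b + (1 - l) * b')
      (l * c + (1 - l) * c') := by
  obtain ⟨k, p, hp, rfl, ha, hb, hc⟩ := h
  obtain ⟨k', p', hp', hpX', ha', hb', hc'⟩ := h'
  have hmarg : ∀ x, ∑ u, p' u x = ∑ u, p u x := congrFun hpX'
  have hl₁' : 0 ≤ 1 - l := sub_nonneg.2 hl₁
  have h := of_isPMF2 hpS hW (hp.timeShare hp' hl₀ hl₁)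
  simp only [sum_timeShare l hmarg] at h
  refine h.mono ?_ ?_ ?_
  · rw [rateIUZ_eq hpS hW (hp.timeShare hp' hl₀ hl₁), auxInfo_timeShare _ _ _ _
      fun x => (hmarg x).symm, ← rateIUZ_eq hpS hW hp, ← rateIUZ_eq hpS hW hp']
    gcongr
  · rw [rateIUY_S_eq, auxInfo_timeShare _ _ _ _ fun x => (hmarg x).symm, ← rateIUY_S_eq,
      ← rateIUY_S_eq]
    gcongr
  · rw [rateIXY_US_eq, condInputInfo_timeShare, ← rateIXY_US_eq, ← rateIXY_US_eq]
    gcongr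

end AuxRatesAttainable

end Attainable

lemma exists_mem_Icc_mul_eq {r I : ℝ} (hr : 0 ≤ r) (hrI : r ≤ I) :
    ∃ l, 0 ≤ l ∧ l ≤ 1 ∧ l * I = r := by
  rcases hr.eq_or_lt with rfl | hr
  · exact ⟨0, le_rfl, zero_le_one, zero_mul I⟩
  have hI : 0 < I := hr.trans_le hrI
  exact ⟨r / I, by positivity, (div_le_one hI).2 hrI, div_mul_cancel₀ r hI.ne'⟩

section Regions

variable {𝓧 𝓢 𝓨 𝓩 : Type*} [Fintype 𝓧] [Fintype 𝓢] [Fintype 𝓨] [Fintype 𝓩]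

variable (pS : 𝓢 → ℝ) (W : 𝓧 → 𝓢 → 𝓨 × 𝓩 → ℝ)

def regionA : Set (ℝ × ℝ) :=
  {r | 0 ≤ r.1 ∧ 0 ≤ r.2 ∧ ∃ (k : ℕ) (pUX : Fin k → 𝓧 → ℝ), IsPMF2 pUX ∧
    r.1 ≤ rateIUZ pUX pS W ∧
    r.2 ≤ rateIXY_US pUX pS W ∧
    r.1 + r.2 ≤ rateIXY_S (fun x => ∑ u, pUX u x) pS W}

def regionB : Set (ℝ × ℝ) :=
  {r | 0 ≤ r.1 ∧ 0 ≤ r.2 ∧ ∃ (k : ℕ) (pUX : Fin k → 𝓧 → ℝ), IsPMF2 pUX ∧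
    r.1 ≤ rateIUZ pUX pS W ∧
    r.1 + r.2 ≤ rateIXY_US pUX pS W + rateIUZ pUX pS W ∧
    r.1 + r.2 ≤ rateIXY_S (fun x => ∑ u, pUX u x) pS W}

def regionC : Set (ℝ × ℝ) :=
  {r | 0 ≤ r.1 ∧ 0 ≤ r.2 ∧ ∃ (k : ℕ) (pUX : Fin k → 𝓧 → ℝ), IsPMF2 pUX ∧
    r.1 ≤ min (rateIUZ pUX pS W) (rateIUY_S pUX pS W) ∧
    r.2 ≤ rateIXY_US pUX pS W}

variable {pS W}

lemma AuxRatesAttainable.mem_regionA {pX : 𝓧 → ℝ} {a b c : ℝ} {r : ℝ × ℝ}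
    (h : AuxRatesAttainable pS W pX a b c) (h₀ : 0 ≤ r.1) (h₁ : 0 ≤ r.2) (ha : r.1 ≤ a)
    (hc : r.2 ≤ c) (hsum : r.1 + r.2 ≤ rateIXY_S pX pS W) : r ∈ regionA pS W := by
  obtain ⟨k, p, hp, rfl, ha₀, -, hc₀⟩ := h
  exact ⟨h₀, h₁, k, p, hp, ha.trans ha₀, hc.trans hc₀, hsum⟩

lemma AuxRatesAttainable.mem_regionC {pX : 𝓧 → ℝ} {a b c : ℝ} {r : ℝ × ℝ}
    (h : AuxRatesAttainable pS W pX a b c) (h₀ : 0 ≤ r.1) (h₁ : 0 ≤ r.2) (ha : r.1 ≤ a)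
    (hb : r.1 ≤ b) (hc : r.2 ≤ c) : r ∈ regionC pS W := by
  obtain ⟨k, p, hp, -, ha₀, hb₀, hc₀⟩ := h
  exact ⟨h₀, h₁, k, p, hp, le_min (ha.trans ha₀) (hb.trans hb₀), hc.trans hc₀⟩

lemma regionA_subset_regionB : regionA pS W ⊆ regionB pS W := by
  rintro r ⟨h₀, h₁, k, p, hp, hZ, hXY, hsum⟩
  exact ⟨h₀, h₁, k, p, hp, hZ, by linarith, hsum⟩

/-- Time-share `U` with a constant auxiliary, giving the weight `l` with `l I(U;Z) = R0` to `U`. -/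
lemma regionB_subset_regionA (hpS : IsPMF pS) (hW : IsChan2 W) : regionB pS W ⊆ regionA pS W := by
  rintro r ⟨h₀, h₁, k, p, hp, hZ, hsumUZ, hsum⟩
  obtain ⟨l, hl₀, hl₁, hl⟩ := exists_mem_Icc_mul_eq h₀ hZ
  have h := (AuxRatesAttainable.of_isPMF2 hpS hW hp).convex hpS hW
    (AuxRatesAttainable.const hpS hW hp.marginal) hl₀ hl₁
  refine h.mem_regionA h₀ h₁ (by rw [mul_zero, add_zero, hl]) ?_ hsum
  linarith [mul_le_mul_of_nonneg_left hsumUZ hl₀,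
    mul_le_mul_of_nonneg_left hsum (sub_nonneg.2 hl₁)]

lemma regionC_subset_regionB (hpS : IsPMF pS) (hW : IsChan2 W) : regionC pS W ⊆ regionB pS W := by
  rintro r ⟨h₀, h₁, k, p, hp, hmin, hXY⟩
  obtain ⟨hZ, hY⟩ := le_min_iff.1 hmin
  exact ⟨h₀, h₁, k, p, hp, hZ, by linarith, by rw [rateIXY_S_marginal_eq_add hpS hW hp]; linarith⟩

/-- If `R0 ≤ I(U;Y|S)`, time-share `U` with a constant auxiliary as for `regionB_subset_regionA`;
otherwise time-share `U` with `(U, X)`, raising `I(U;Y|S)` to exactly `R0`. -/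
lemma regionB_subset_regionC (hpS : IsPMF pS) (hW : IsChan2 W) : regionB pS W ⊆ regionC pS W := by
  rintro r ⟨h₀, h₁, k, p, hp, hZ, hsumUZ, hsum⟩
  have hchain := rateIXY_S_marginal_eq_add hpS hW hp
  have hself := AuxRatesAttainable.of_isPMF2 hpS hW hp
  rcases le_or_gt r.1 (rateIUY_S p pS W) with hY | hY
  · obtain ⟨l, hl₀, hl₁, hl⟩ := exists_mem_Icc_mul_eq h₀ (le_min hZ hY)
    have h := hself.convex hpS hW (AuxRatesAttainable.const hpS hW hp.marginal) hl₀ hl₁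
    have hmin : r.1 + r.2 ≤ rateIXY_US p pS W + min (rateIUZ p pS W) (rateIUY_S p pS W) := by
      rw [← sub_le_iff_le_add']
      exact le_min (by linarith) (by linarith)
    refine h.mem_regionC h₀ h₁ ?_ ?_ ?_
    · linarith [mul_le_mul_of_nonneg_left (min_le_left (rateIUZ p pS W) (rateIUY_S p pS W)) hl₀]
    · linarith [mul_le_mul_of_nonneg_left (min_le_right (rateIUZ p pS W) (rateIUY_S p pS W)) hl₀]
    · nlinarith [mul_le_mul_of_nonneg_left (min_le_right (rateIUZ p pS W) (rateIUY_S p pS W))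
        (sub_nonneg.2 hl₁)]
  · have hgap : r.1 - rateIUY_S p pS W ≤ rateIXY_US p pS W := by linarith
    obtain ⟨a, ha₀, ha₁, ha⟩ := exists_mem_Icc_mul_eq (sub_nonneg.2 hY.le) hgap
    have h := (AuxRatesAttainable.withInput hpS hW hp).convex hpS hW hself ha₀ ha₁
    exact h.mem_regionC h₀ h₁ (by linarith) (by rw [hchain]; linarith) (by linarith)

end Regions

/-- **Equivalence of three rate regions** (`𝒜 = ℬ = 𝒞`), where the unions are over
all finite auxiliary alphabets `𝒰` and pmfs `P_{UX}`, and rate pairs are restricted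
to `R0, R1 ≥ 0`. -/
theorem region_equivalence
    {𝓧 𝓢 𝓨 𝓩 : Type*} [Fintype 𝓧] [Fintype 𝓢] [Fintype 𝓨] [Fintype 𝓩]
    (pS : 𝓢 → ℝ) (hpS : IsPMF pS)
    (W : 𝓧 → 𝓢 → 𝓨 × 𝓩 → ℝ) (hW : IsChan2 W) :
    ({r : ℝ × ℝ | 0 ≤ r.1 ∧ 0 ≤ r.2 ∧ ∃ (k : ℕ) (pUX : Fin k → 𝓧 → ℝ), IsPMF2 pUX ∧
        r.1 ≤ rateIUZ pUX pS W ∧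
        r.2 ≤ rateIXY_US pUX pS W ∧
        r.1 + r.2 ≤ rateIXY_S (fun x => ∑ u, pUX u x) pS W} =
      {r : ℝ × ℝ | 0 ≤ r.1 ∧ 0 ≤ r.2 ∧ ∃ (k : ℕ) (pUX : Fin k → 𝓧 → ℝ), IsPMF2 pUX ∧
        r.1 ≤ rateIUZ pUX pS W ∧
        r.1 + r.2 ≤ rateIXY_US pUX pS W + rateIUZ pUX pS W ∧
        r.1 + r.2 ≤ rateIXY_S (fun x => ∑ u, pUX u x) pS W}) ∧
    ({r : ℝ × ℝ | 0 ≤ r.1 ∧ 0 ≤ r.2 ∧ ∃ (k : ℕ) (pUX : Fin k → 𝓧 → ℝ), IsPMF2 pUX ∧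
        r.1 ≤ rateIUZ pUX pS W ∧
        r.1 + r.2 ≤ rateIXY_US pUX pS W + rateIUZ pUX pS W ∧
        r.1 + r.2 ≤ rateIXY_S (fun x => ∑ u, pUX u x) pS W} =
      {r : ℝ × ℝ | 0 ≤ r.1 ∧ 0 ≤ r.2 ∧ ∃ (k : ℕ) (pUX : Fin k → 𝓧 → ℝ), IsPMF2 pUX ∧
        r.1 ≤ min (rateIUZ pUX pS W) (rateIUY_S pUX pS W) ∧
        r.2 ≤ rateIXY_US pUX pS W}) :=
  ⟨regionA_subset_regionB.antisymm (regionB_subset_regionA hpS hW),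
    (regionB_subset_regionC hpS hW).antisymm (regionC_subset_regionB hpS hW)⟩
end
end

section
/- Per-letter optimality of the genie-aided estimator. Let 𝒳, 𝒮, 𝒵 be finite alphabets, P_S a pmf on 𝒮, and P_{Z|XS} a channel. Let X^n be a random vector in 𝒳^n (with arbitrary distribution) independent of the i.i.d. state sequence S^n ~ P_S^{⊗n}, and let Z_i be generated given (X_i, S_i) independently over i according to P_{Z|XS}. Define the single-letter estimator ŝ*(x, z) = argmin_{s' ∈ 𝒮} Σ_{s ∈ 𝒮} P_{S|XZ}(s | x, z) d(s, s'), where P_{S|XZ}(s | x, z) = P_S(s) P_{Z|XS}(z | x, s) / Σ_{s̃} P_S(s̃) P_{Z|XS}(z | x, s̃). Then for every estimator h : 𝒳^n × 𝒵^n → 𝒮^n with components h_i, (1/n) Σ_{i=1}^n E[d(S_i, ŝ*(X_i, Z_i))] ≤ (1/n) Σ_{i=1}^n E[d(S_i, h_i(X^n, Z^n))]. -/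
open scoped BigOperators
open Filter

noncomputable section

/-- **Per-letter optimality of the genie-aided estimator.**
Let `X^n` (arbitrarily distributed) be independent of the i.i.d. state sequence
`S^n ~ P_S^{⊗n}`, and let `Z_i` be generated from `(X_i, S_i)` independently over `i`
via `P_{Z|XS}`.  If `ŝ*` satisfies the single-letter argmin property (stated with the
weights `P_S(s)·P_{Z|XS}(z|x,s)`, equivalently `P_{S|XZ}(s|x,z)`), then for every
estimator `h : 𝒳^n × 𝒵^n → 𝒮^n`,
`(1/n) ∑_i E[d(S_i, ŝ*(X_i,Z_i))] ≤ (1/n) ∑_i E[d(S_i, h_i(X^n,Z^n))]`. -/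
theorem genie_aided_estimator_per_letter_optimality
    {𝓧 𝓢 𝓩 : Type*} [Fintype 𝓧] [Fintype 𝓢] [Fintype 𝓩]
    (pS : 𝓢 → ℝ) (hpS : IsPMF pS)
    (Wz : 𝓧 → 𝓢 → 𝓩 → ℝ) (hWz : IsChan2 Wz)
    (d : 𝓢 → 𝓢 → ℝ) (hd : ∀ s t, 0 ≤ d s t)
    (n : ℕ) (pXn : (Fin n → 𝓧) → ℝ) (hpXn : IsPMF pXn)
    (sstar : 𝓧 → 𝓩 → 𝓢)
    (hstar : ∀ x z s', ∑ s, pS s * Wz x s z * d s (sstar x z) ≤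
      ∑ s, pS s * Wz x s z * d s s')
    (h : (Fin n → 𝓧) → (Fin n → 𝓩) → Fin n → 𝓢) :
    (1 / (n : ℝ)) * ∑ xv : Fin n → 𝓧, ∑ sv : Fin n → 𝓢, ∑ zv : Fin n → 𝓩,
        (pXn xv * ∏ i, pS (sv i) * Wz (xv i) (sv i) (zv i)) *
          ∑ i, d (sv i) (sstar (xv i) (zv i)) ≤
      (1 / (n : ℝ)) * ∑ xv : Fin n → 𝓧, ∑ sv : Fin n → 𝓢, ∑ zv : Fin n → 𝓩,
        (pXn xv * ∏ i, pS (sv i) * Wz (xv i) (sv i) (zv i)) *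
          ∑ i, d (sv i) (h xv zv i) := by
  classical
  -- factorization lemma
  have key : ∀ (xv : Fin n → 𝓧) (zv : Fin n → 𝓩) (i : Fin n) (t : 𝓢),
      ∑ sv : Fin n → 𝓢, (∏ j, pS (sv j) * Wz (xv j) (sv j) (zv j)) * d (sv i) t
      = (∏ j ∈ Finset.univ.erase i, ∑ s, pS s * Wz (xv j) s (zv j)) *
        ∑ s, pS s * Wz (xv i) s (zv i) * d s t := by
    intro xv zv i t
    have step1 : ∀ sv : Fin n → 𝓢,
        (∏ j, pS (sv j) * Wz (xv j) (sv j) (zv j)) * d (sv i) t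
        = ∏ j, (if j = i then pS (sv j) * Wz (xv j) (sv j) (zv j) * d (sv j) t
            else pS (sv j) * Wz (xv j) (sv j) (zv j)) := by
      intro sv
      rw [← Finset.mul_prod_erase Finset.univ
            (fun j => if j = i then pS (sv j) * Wz (xv j) (sv j) (zv j) * d (sv j) t
              else pS (sv j) * Wz (xv j) (sv j) (zv j)) (Finset.mem_univ i),
          ← Finset.mul_prod_erase Finset.univ
            (fun j => pS (sv j) * Wz (xv j) (sv j) (zv j)) (Finset.mem_univ i)]
      simp only [eq_self_iff_true, if_true]
      have herase :
          (∏ j ∈ Finset.univ.erase i, (if j = i then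
            pS (sv j) * Wz (xv j) (sv j) (zv j) * d (sv j) t
            else pS (sv j) * Wz (xv j) (sv j) (zv j)))
          = ∏ j ∈ Finset.univ.erase i, pS (sv j) * Wz (xv j) (sv j) (zv j) :=
        Finset.prod_congr rfl fun j hj => by
          rw [if_neg (Finset.mem_erase.mp hj).1]
      rw [herase]
      ring
    simp_rw [step1]
    rw [show (∑ sv : Fin n → 𝓢, ∏ j, (if j = i then
          pS (sv j) * Wz (xv j) (sv j) (zv j) * d (sv j) t
          else pS (sv j) * Wz (xv j) (sv j) (zv j)))
        = ∏ j, ∑ s, (if j = i then pS s * Wz (xv j) s (zv j) * d s t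
          else pS s * Wz (xv j) s (zv j)) by
      rw [Finset.prod_univ_sum]
      rw [← Fintype.piFinset_univ]]
    rw [← Finset.mul_prod_erase Finset.univ _ (Finset.mem_univ i)]
    simp only [eq_self_iff_true, if_true]
    have herase2 :
        (∏ j ∈ Finset.univ.erase i, (∑ s, if j = i then
            pS s * Wz (xv j) s (zv j) * d s t else pS s * Wz (xv j) s (zv j)))
          = ∏ j ∈ Finset.univ.erase i, ∑ s, pS s * Wz (xv j) s (zv j) :=
      Finset.prod_congr rfl fun j hj => by
        simp only [if_neg (Finset.mem_erase.mp hj).1]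
    rw [herase2, mul_comm]
  have Cnn : ∀ (xv : Fin n → 𝓧) (zv : Fin n → 𝓩) (i : Fin n),
      0 ≤ ∏ j ∈ Finset.univ.erase i, ∑ s, pS s * Wz (xv j) s (zv j) := by
    intro xv zv i
    exact Finset.prod_nonneg fun j _ => Finset.sum_nonneg fun s _ =>
      mul_nonneg (hpS.1 s) ((hWz (xv j) s).1 (zv j))
  -- per-xv inequality
  have main : ∀ xv : Fin n → 𝓧,
      (∑ sv : Fin n → 𝓢, ∑ zv : Fin n → 𝓩,
        (∏ i, pS (sv i) * Wz (xv i) (sv i) (zv i)) *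
          ∑ i, d (sv i) (sstar (xv i) (zv i))) ≤
      ∑ sv : Fin n → 𝓢, ∑ zv : Fin n → 𝓩,
        (∏ i, pS (sv i) * Wz (xv i) (sv i) (zv i)) *
          ∑ i, d (sv i) (h xv zv i) := by
    intro xv
    have swap : ∀ t : (Fin n → 𝓩) → Fin n → 𝓢,
        (∑ sv : Fin n → 𝓢, ∑ zv : Fin n → 𝓩,
          (∏ i, pS (sv i) * Wz (xv i) (sv i) (zv i)) * ∑ i, d (sv i) (t zv i))
        = ∑ i, ∑ zv : Fin n → 𝓩, ∑ sv : Fin n → 𝓢,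
          (∏ j, pS (sv j) * Wz (xv j) (sv j) (zv j)) * d (sv i) (t zv i) := by
      intro t
      simp_rw [Finset.mul_sum]
      rw [Finset.sum_comm]
      refine Eq.trans (Finset.sum_congr rfl fun zv _ => Finset.sum_comm) ?_
      exact Finset.sum_comm
    rw [swap (fun zv i => sstar (xv i) (zv i)), swap (fun zv i => h xv zv i)]
    refine Finset.sum_le_sum fun i _ => Finset.sum_le_sum fun zv _ => ?_
    rw [key xv zv i (sstar (xv i) (zv i)), key xv zv i (h xv zv i)]
    exact mul_le_mul_of_nonneg_left (hstar (xv i) (zv i) (h xv zv i)) (Cnn xv zv i)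
  refine mul_le_mul_of_nonneg_left ?_ (by positivity)
  refine Finset.sum_le_sum fun xv _ => ?_
  simp_rw [mul_assoc, ← Finset.mul_sum]
  exact mul_le_mul_of_nonneg_left (main xv) (hpXn.1 xv)

end
end
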